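/- arXiv:2002.10000 — 10 statements merged into one kernel-verified Lean document; each statement's English description precedes it below -/
import Mathlib

section
/- Let R be a principal ideal domain and S a commutative unital R-algebra that is free of rank d ≥ 1 as an R-module. Then S admits an R-module basis of the form (1, α₁, …, α_{d−1}), i.e. a basis whose first element is the multiplicative identity of S. -/
/-!
`1` is primitive in `S`: if `r • w = 1`, then multiplication by `w` inverts `r • id` on `S`, so
`det (r • id) = r ^ d` is a unit and hence so is `r`. Over a PID, the Smith normal form of the
line `R ∙ v` through a primitive vector `v` puts `v`, up to a unit, into a basis.
-/

theorem isUnit_of_isUnit_algebraMap {R S : Type*} [CommRing R] [Ring S] [Algebra R S]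
    [Module.Free R S] (hS : Module.finrank R S ≠ 0) {r : R}
    (hr : IsUnit (algebraMap R S r)) : IsUnit r := by
  have hlmul : IsUnit (algebraMap R (Module.End R S) r) := by
    simpa only [AlgHom.commutes] using hr.map (Algebra.lmul R S)
  have hdet := LinearMap.isUnit_det _ hlmul
  rwa [Module.algebraMap_end_eq_smul_id, LinearMap.det_smul, LinearMap.det_id, mul_one,
    isUnit_pow_iff hS] at hdet

theorem Module.Basis.exists_basis_apply_eq {R M ι : Type*} [CommRing R] [IsDomain R]
    [IsPrincipalIdealRing R] [AddCommGroup M] [Module R M] [Finite ι] (b : Basis ι R M)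
    {v : M} (hv : ∀ (r : R) (w : M), r • w = v → IsUnit r) (i : ι) :
    ∃ b' : Basis ι R M, b' i = v := by
  classical
  have hv0 : v ≠ 0 := by
    rintro rfl
    exact not_isUnit_zero (hv 0 0 (zero_smul R (0 : M)))
  obtain ⟨n, bM, bN, f, a, hsnf⟩ := (Submodule.span R {v}).smithNormalForm b
  obtain rfl : n = 1 := by
    have : Module.Free R M := .of_basis b
    rw [← Fintype.card_fin n, ← Module.finrank_eq_card_basis bN,
      ← (LinearEquiv.toSpanNonzeroSingleton R M v hv0).finrank_eq, Module.finrank_self]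
  set c := bN.repr ⟨v, Submodule.mem_span_singleton_self v⟩ 0
  have hv_eq : v = (c * a 0) • bM (f 0) := by
    have := congr_arg Subtype.val (bN.sum_repr ⟨v, Submodule.mem_span_singleton_self v⟩)
    rw [Fin.sum_univ_one, Submodule.coe_smul, hsnf] at this
    rw [mul_smul, this]
  obtain ⟨u, hu⟩ := hv _ _ hv_eq.symm
  refine ⟨(bM.unitsSMul (Pi.mulSingle (f 0) u)).reindex (Equiv.swap (f 0) i), ?_⟩
  rw [Basis.reindex_apply, Equiv.symm_swap, Equiv.swap_apply_right, Basis.unitsSMul_apply,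
    Pi.mulSingle_eq_same, Units.smul_def, hu, hv_eq]

theorem stmt_1_general (R S : Type*) [CommRing R] [IsDomain R] [IsPrincipalIdealRing R]
    [CommRing S] [Algebra R S] [Module.Free R S]
    (d : ℕ) (hrank : Module.finrank R S = d)
    (i0 : Fin d) :
    ∃ b : Module.Basis (Fin d) R S, b i0 = 1 := by
  have hS : Module.finrank R S ≠ 0 := hrank ▸ i0.pos.ne'
  have : Module.Finite R S := Module.finite_of_finrank_pos (Nat.pos_of_ne_zero hS)
  refine (Module.finBasisOfFinrankEq R S hrank).exists_basis_apply_eq (fun r w h => ?_) i0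
  rw [Algebra.smul_def] at h
  exact isUnit_of_isUnit_algebraMap hS (.of_mul_eq_one w h)

/-- Let `R` be a principal ideal domain and `S` a commutative unital `R`-algebra that is
free of rank `d ≥ 1` as an `R`-module.  Then `S` admits an `R`-module basis whose first
element is the multiplicative identity `1` of `S`. -/
theorem stmt_1 (R S : Type*) [CommRing R] [IsDomain R] [IsPrincipalIdealRing R]
    [CommRing S] [Algebra R S] [Module.Free R S]
    (d : ℕ) (hd : 1 ≤ d) (hrank : Module.finrank R S = d)
    (i0 : Fin d) (hi0 : (i0 : ℕ) = 0) :
    ∃ b : Module.Basis (Fin d) R S, b i0 = 1 :=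
  stmt_1_general R S d hrank i0
end

section
/- Let R be a principal ideal domain and S a commutative unital R-algebra that is free of rank 3 as an R-module. Then S admits an R-module basis of the form (1, α₁, α₂) such that the product α₁·α₂ lies in R·1 (the R-span of the identity). Such a basis is called a normal basis. -/
/-!
Over a PID a nonzero vector that is not a proper multiple `d • y` (`d` a non-unit) is part of a
basis, by the Smith normal form of the line it spans. The identity of `S` is such a vector:
taking norms in `u • e = 1` gives `u ^ rank * N(e) = 1`. Given a basis `(1, β₁, β₂)` with
`β₁ β₂ = q₀ + q₁ β₁ + q₂ β₂`, the basis `(1, β₁ - q₂, β₂ - q₁)` is normal, since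
`(β₁ - q₂)(β₂ - q₁) = q₀ + q₁ q₂`.
-/

open Module

theorem isUnit_of_smul_eq_one {R S : Type*} [CommRing R] [Nontrivial R] [Ring S] [Algebra R S]
    [Free R S] [Module.Finite R S] [Nontrivial S] {u : R} {e : S} (h : u • e = 1) :
    IsUnit u := by
  have hnorm := congrArg (Algebra.norm R) h
  rw [Algebra.smul_def, map_mul, Algebra.norm_algebraMap, map_one] at hnorm
  have hrank : finrank R S ≠ 0 := ((finrank_pos_iff_of_free R S).mpr ‹_›).ne'
  exact isUnit_of_dvd_one ((dvd_pow_self u hrank).trans (Dvd.intro _ hnorm))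

theorem Module.Basis.exists_basis_add_smul {R M ι : Type*} [CommRing R] [AddCommGroup M]
    [Module R M] (b : Basis ι R M) {i₀ : ι} (r : ι → R) (hr : r i₀ = 0) :
    ∃ b' : Basis ι R M, ∀ i, b' i = b i + r i • b i₀ :=
  ⟨b.map (LinearEquiv.transvection (f := b.constr R r) (v := b i₀) (by simp [hr])),
    fun i => by simp [LinearMap.transvection.apply]⟩

theorem Module.Basis.exists_basis_apply_eq_of_primitive {R M ι : Type*} [CommRing R]
    [IsDomain R] [IsPrincipalIdealRing R] [AddCommGroup M] [Module R M] [Finite ι]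
    (b : Basis ι R M) {x : M} (hprim : ∀ (d : R) (y : M), d • y = x → IsUnit d) :
    ∃ (b' : Basis ι R M) (i : ι), b' i = x := by
  classical
  have : Free R M := .of_basis b
  obtain ⟨n, snf⟩ := (R ∙ x).smithNormalForm b
  have hx : x ≠ 0 := by
    rintro rfl
    exact not_isUnit_zero (hprim 0 0 (smul_zero 0))
  have hn : n = 1 := by
    have hli : LinearIndependent R fun _ : Fin 1 => x := .of_subsingleton 0 hx
    have := finrank_span_eq_card hli
    rw [Set.range_const, finrank_eq_card_basis snf.bN] at this
    simpa using this
  subst hn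
  have hx_repr := snf.bN.sum_repr ⟨x, Submodule.mem_span_singleton_self x⟩
  obtain ⟨c, hc⟩ : ∃ c : R, c • (snf.bN 0 : M) = x :=
    ⟨_, by simpa using congrArg Subtype.val hx_repr⟩
  rw [snf.snf, smul_smul] at hc
  have hu := hprim _ _ hc
  refine ⟨snf.bM.unitsSMul (Function.update 1 (snf.f 0) hu.unit), snf.f 0, ?_⟩
  simp [Basis.unitsSMul_apply, Units.smul_def, hc]

theorem exists_normal_basis_of_basis_zero_eq_one {R S : Type*} [CommRing R] [CommRing S]
    [Algebra R S] (b : Basis (Fin 3) R S) (hb : b 0 = 1) :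
    ∃ b' : Basis (Fin 3) R S, b' 0 = 1 ∧ ∃ c : R, b' 1 * b' 2 = algebraMap R S c := by
  set q := b.repr (b 1 * b 2)
  have hq : b 1 * b 2 = q 0 • 1 + q 1 • b 1 + q 2 • b 2 := by
    rw [← hb, ← Fin.sum_univ_three (fun i => q i • b i), b.sum_repr]
  obtain ⟨b', hb'⟩ := b.exists_basis_add_smul (i₀ := 0) ![0, -q 2, -q 1] rfl
  refine ⟨b', by simp [hb', hb], q 0 + q 1 * q 2, ?_⟩
  simp only [hb', hb, Matrix.cons_val_one, Matrix.cons_val_two, Matrix.cons_val_zero,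
    Matrix.head_cons, Matrix.tail_cons]
  simp only [Algebra.smul_def, mul_one, map_add, map_mul, map_neg] at hq ⊢
  linear_combination hq

/-- Let `R` be a principal ideal domain and `S` a commutative unital `R`-algebra that is
free of rank `3` as an `R`-module (a cubic ring).  Then `S` admits an `R`-module basis
`(1, α₁, α₂)` whose first element is `1` and such that `α₁ * α₂` lies in `R·1`;
such a basis is called a *normal* basis. -/
theorem stmt_2 (R S : Type*) [CommRing R] [IsDomain R] [IsPrincipalIdealRing R]
    [CommRing S] [Algebra R S] [Module.Free R S]
    (hrank : Module.finrank R S = 3) :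
    ∃ b : Module.Basis (Fin 3) R S, b 0 = 1 ∧ ∃ c : R, b 1 * b 2 = algebraMap R S c := by
  have : Module.Finite R S := finite_of_finrank_eq_succ hrank
  have : Nontrivial S := nontrivial_of_finrank_eq_succ hrank
  obtain ⟨b, i, hb⟩ := (finBasisOfFinrankEq R S hrank).exists_basis_apply_eq_of_primitive
    fun _ _ => isUnit_of_smul_eq_one
  refine exists_normal_basis_of_basis_zero_eq_one (b.reindex (Equiv.swap i 0)) ?_
  simpa using hb
end

section
/- Let R be a commutative ring and S a commutative, associative, unital R-algebra which is free as an R-module with basis (1, α, β), and suppose there are elements f₀, f₁, f₂, f₃, g₀, g₁, g₂ ∈ R such that the multiplication satisfies α·β = −g₀·1, α² = −g₁·1 + f₂·α − f₃·β, and β² = −g₂·1 + f₀·α − f₁·β. Then necessarily g₀ = f₀f₃, g₁ = f₁f₃, and g₂ = f₀f₂. -/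
/-!
Expanding both sides of the associativity identities `(α·α)·β = α·(α·β)` and
`(α·β)·β = α·(β·β)` with the multiplication table and comparing coordinates in the basis
`(1, α, β)` gives the three relations: the first identity yields `g₀ = f₀f₃` (coefficient of `α`)
and `g₁ = f₁f₃` (coefficient of `β`), the second yields `g₂ = f₀f₂` (coefficient of `α`).
-/

namespace Module.Basis

variable {R S : Type*} [CommRing R] [CommRing S] [Algebra R S]

theorem eq_of_algebraMap_add_smul_add_smul_eq {b : Basis (Fin 3) R S} (hb0 : b 0 = 1)
    {c₀ c₁ c₂ d₀ d₁ d₂ : R}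
    (h : algebraMap R S c₀ + c₁ • b 1 + c₂ • b 2 = algebraMap R S d₀ + d₁ • b 1 + d₂ • b 2) :
    c₀ = d₀ ∧ c₁ = d₁ ∧ c₂ = d₂ := by
  have hcoords (c : Fin 3 → R) :
      algebraMap R S (c 0) + c 1 • b 1 + c 2 • b 2 = b.equivFun.symm c := by
    simp only [equivFun_symm_apply, Fin.sum_univ_three, hb0, Algebra.algebraMap_eq_smul_one]
  have hc := b.equivFun.symm.injective ((hcoords ![c₀, c₁, c₂]).symm.trans
    (h.trans (hcoords ![d₀, d₁, d₂])))
  exact ⟨congrFun hc 0, congrFun hc 1, congrFun hc 2⟩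

end Module.Basis

/-- Let `R` be a commutative ring and `S` a commutative associative unital `R`-algebra
that is free with basis `(1, α, β)`, and suppose the multiplication table is
`α·β = −g₀·1`, `α² = −g₁·1 + f₂·α − f₃·β`, `β² = −g₂·1 + f₀·α − f₁·β`.
Then necessarily `g₀ = f₀f₃`, `g₁ = f₁f₃` and `g₂ = f₀f₂`. -/
theorem stmt_3 (R S : Type*) [CommRing R] [CommRing S] [Algebra R S]
    (b : Module.Basis (Fin 3) R S) (hb0 : b 0 = 1)
    (f₀ f₁ f₂ f₃ g₀ g₁ g₂ : R)
    (hαβ : b 1 * b 2 = algebraMap R S (-g₀))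
    (hα2 : b 1 * b 1 = algebraMap R S (-g₁) + f₂ • b 1 - f₃ • b 2)
    (hβ2 : b 2 * b 2 = algebraMap R S (-g₂) + f₀ • b 1 - f₁ • b 2) :
    g₀ = f₀ * f₃ ∧ g₁ = f₁ * f₃ ∧ g₂ = f₀ * f₂ := by
  simp only [Algebra.smul_def, map_neg] at hαβ hα2 hβ2
  have hααβ : algebraMap R S (f₃ * g₂ - f₂ * g₀) + (-(f₀ * f₃)) • b 1 + (f₁ * f₃ - g₁) • b 2 =
      algebraMap R S 0 + (-g₀) • b 1 + (0 : R) • b 2 := by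
    simp only [Algebra.smul_def, map_sub, map_mul, map_neg, map_zero]
    linear_combination b 1 * hαβ - b 2 * hα2 - algebraMap R S f₂ * hαβ
      + algebraMap R S f₃ * hβ2
  have hαββ : algebraMap R S (f₁ * g₀ - f₀ * g₁) + (f₀ * f₂ - g₂) • b 1 + (-(f₀ * f₃)) • b 2 =
      algebraMap R S 0 + (0 : R) • b 1 + (-g₀) • b 2 := by
    simp only [Algebra.smul_def, map_sub, map_mul, map_neg, map_zero]
    linear_combination b 2 * hαβ - b 1 * hβ2 - algebraMap R S f₀ * hα2
      + algebraMap R S f₁ * hαβ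
  obtain ⟨-, hg₀, hg₁⟩ := Module.Basis.eq_of_algebraMap_add_smul_add_smul_eq hb0 hααβ
  obtain ⟨-, hg₂, -⟩ := Module.Basis.eq_of_algebraMap_add_smul_add_smul_eq hb0 hαββ
  exact ⟨by linear_combination hg₀, by linear_combination -hg₁, by linear_combination -hg₂⟩
end

section
/- Let R be a commutative ring and f₀, f₁, f₂, f₃ ∈ R. Define on the free R-module S = R·1 ⊕ R·α ⊕ R·β the R-bilinear multiplication determined by: 1 is a two-sided identity, α·β = β·α = −f₀f₃·1, α² = −f₁f₃·1 + f₂·α − f₃·β, and β² = −f₀f₂·1 + f₀·α − f₁·β. Then this multiplication is commutative and associative, so S is a commutative unital R-algebra free of rank 3 over R. -/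
/-- The multiplication of the cubic ring associated to the binary cubic form
`f = f₃Y₁³ + f₂Y₁²Y₂ + f₁Y₁Y₂² + f₀Y₂³`, written out on the free `R`-module
`R³ = R·1 ⊕ R·α ⊕ R·β` (coordinates with respect to the basis `(1, α, β)`),
determined by: `1` is a two-sided identity, `α·β = β·α = −f₀f₃·1`,
`α² = −f₁f₃·1 + f₂·α − f₃·β` and `β² = −f₀f₂·1 + f₀·α − f₁·β`. -/
def cubicMul {R : Type*} [CommRing R] (f₀ f₁ f₂ f₃ : R) (x y : Fin 3 → R) : Fin 3 → R :=
  ![x 0 * y 0 - f₁ * f₃ * (x 1 * y 1) - f₀ * f₃ * (x 1 * y 2 + x 2 * y 1)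
      - f₀ * f₂ * (x 2 * y 2),
    x 0 * y 1 + x 1 * y 0 + f₂ * (x 1 * y 1) + f₀ * (x 2 * y 2),
    x 0 * y 2 + x 2 * y 0 - f₃ * (x 1 * y 1) - f₁ * (x 2 * y 2)]

/-- The multiplication `cubicMul f₀ f₁ f₂ f₃` on the free rank-`3` `R`-module `R³`
(the cubic ring attached to the binary cubic form `f₃Y₁³ + f₂Y₁²Y₂ + f₁Y₁Y₂² + f₀Y₂³`)
is `R`-bilinear, commutative and associative, and `![1,0,0]` (the basis element `1`) is a
two-sided identity; hence it makes `R³` a commutative unital `R`-algebra which is free of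
rank `3` as an `R`-module. -/
theorem stmt_4 (R : Type*) [CommRing R] (f₀ f₁ f₂ f₃ : R) :
    (∀ (a : R) (x x' y : Fin 3 → R),
        cubicMul f₀ f₁ f₂ f₃ (a • x + x') y
          = a • cubicMul f₀ f₁ f₂ f₃ x y + cubicMul f₀ f₁ f₂ f₃ x' y) ∧
    (∀ (a : R) (x y y' : Fin 3 → R),
        cubicMul f₀ f₁ f₂ f₃ x (a • y + y')
          = a • cubicMul f₀ f₁ f₂ f₃ x y + cubicMul f₀ f₁ f₂ f₃ x y') ∧
    (∀ x y : Fin 3 → R, cubicMul f₀ f₁ f₂ f₃ x y = cubicMul f₀ f₁ f₂ f₃ y x) ∧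
    (∀ x y z : Fin 3 → R,
        cubicMul f₀ f₁ f₂ f₃ (cubicMul f₀ f₁ f₂ f₃ x y) z
          = cubicMul f₀ f₁ f₂ f₃ x (cubicMul f₀ f₁ f₂ f₃ y z)) ∧
    (∀ x : Fin 3 → R, cubicMul f₀ f₁ f₂ f₃ ![1, 0, 0] x = x ∧
        cubicMul f₀ f₁ f₂ f₃ x ![1, 0, 0] = x) := by
  refine ⟨?_, ?_, ?_, ?_, ?_⟩
  · intro a x x' y
    funext i; fin_cases i <;> simp [cubicMul] <;> ring
  · intro a x y y'
    funext i; fin_cases i <;> simp [cubicMul] <;> ring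
  · intro x y
    funext i; fin_cases i <;> simp [cubicMul] <;> ring
  · intro x y z
    funext i; fin_cases i <;> simp [cubicMul] <;> ring
  · intro x
    constructor <;> (funext i; fin_cases i <;> simp [cubicMul])
end

section
/- Let R be a commutative ring, f = f₃Y₁³ + f₂Y₁²Y₂ + f₁Y₁Y₂² + f₀Y₂³ a binary cubic form over R, and A = ((a, b), (c, d)) ∈ GL₂(R). Define the twisted action A∗f = (det A)⁻¹ · f(aY₁ + cY₂, bY₁ + dY₂). Then the cubic ring S_{A∗f} associated to A∗f is isomorphic, as an R-algebra, to the cubic ring S_f associated to f. -/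
open Matrix

section

variable {R : Type*} [CommRing R]

section CubicRing

variable (f₀ f₁ f₂ f₃ : R)

theorem cubicMul_comm (x y : Fin 3 → R) :
    cubicMul f₀ f₁ f₂ f₃ x y = cubicMul f₀ f₁ f₂ f₃ y x :=
  vec3_eq (by ring) (by ring) (by ring)

theorem cubicMul_one_left (x : Fin 3 → R) : cubicMul f₀ f₁ f₂ f₃ ![1, 0, 0] x = x := by
  funext i; fin_cases i <;> simp [cubicMul]

theorem cubicMul_one_right (x : Fin 3 → R) : cubicMul f₀ f₁ f₂ f₃ x ![1, 0, 0] = x := by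
  rw [cubicMul_comm, cubicMul_one_left]

theorem cubicMul_alpha_alpha :
    cubicMul f₀ f₁ f₂ f₃ ![0, 1, 0] ![0, 1, 0] = ![-(f₁ * f₃), f₂, -f₃] := by
  funext i; fin_cases i <;> simp [cubicMul]

theorem cubicMul_alpha_beta :
    cubicMul f₀ f₁ f₂ f₃ ![0, 1, 0] ![0, 0, 1] = ![-(f₀ * f₃), 0, 0] := by
  funext i; fin_cases i <;> simp [cubicMul]

theorem cubicMul_beta_beta :
    cubicMul f₀ f₁ f₂ f₃ ![0, 0, 1] ![0, 0, 1] = ![-(f₀ * f₂), f₀, -f₁] := by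
  funext i; fin_cases i <;> simp [cubicMul]

def cubicMulₗ : (Fin 3 → R) →ₗ[R] (Fin 3 → R) →ₗ[R] Fin 3 → R :=
  LinearMap.mk₂ R (cubicMul f₀ f₁ f₂ f₃)
    (fun _ _ _ ↦ by
      simp only [cubicMul, Pi.add_apply, vec3_add]
      exact vec3_eq (by ring) (by ring) (by ring))
    (fun _ _ _ ↦ by
      simp only [cubicMul, Pi.smul_apply, smul_eq_mul, smul_vec3]
      exact vec3_eq (by ring) (by ring) (by ring))
    (fun _ _ _ ↦ by
      simp only [cubicMul, Pi.add_apply, vec3_add]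
      exact vec3_eq (by ring) (by ring) (by ring))
    (fun _ _ _ ↦ by
      simp only [cubicMul, Pi.smul_apply, smul_eq_mul, smul_vec3]
      exact vec3_eq (by ring) (by ring) (by ring))

@[simp]
theorem cubicMulₗ_apply (x y : Fin 3 → R) :
    cubicMulₗ f₀ f₁ f₂ f₃ x y = cubicMul f₀ f₁ f₂ f₃ x y :=
  rfl

end CubicRing

theorem map_cubicMul_of_mul_table {f₀ f₁ f₂ f₃ f₀' f₁' f₂' f₃' : R}
    (e : (Fin 3 → R) →ₗ[R] Fin 3 → R) (he : e ![1, 0, 0] = ![1, 0, 0])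
    (hαα : cubicMul f₀ f₁ f₂ f₃ (e ![0, 1, 0]) (e ![0, 1, 0]) =
      e ![-(f₁' * f₃'), f₂', -f₃'])
    (hαβ : cubicMul f₀ f₁ f₂ f₃ (e ![0, 1, 0]) (e ![0, 0, 1]) = e ![-(f₀' * f₃'), 0, 0])
    (hββ : cubicMul f₀ f₁ f₂ f₃ (e ![0, 0, 1]) (e ![0, 0, 1]) =
      e ![-(f₀' * f₂'), f₀', -f₁'])
    (x y : Fin 3 → R) :
    e (cubicMul f₀' f₁' f₂' f₃' x y) = cubicMul f₀ f₁ f₂ f₃ (e x) (e y) := by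
  suffices h : (cubicMulₗ f₀' f₁' f₂' f₃').compr₂ e = (cubicMulₗ f₀ f₁ f₂ f₃).compl₁₂ e e by
    simpa using LinearMap.congr_fun₂ h x y
  refine LinearMap.ext_basis (Pi.basisFun R (Fin 3)) (Pi.basisFun R (Fin 3)) fun i j ↦ ?_
  have hb₀ : Pi.basisFun R (Fin 3) 0 = ![1, 0, 0] := by ext k; fin_cases k <;> simp
  have hb₁ : Pi.basisFun R (Fin 3) 1 = ![0, 1, 0] := by ext k; fin_cases k <;> simp
  have hb₂ : Pi.basisFun R (Fin 3) 2 = ![0, 0, 1] := by ext k; fin_cases k <;> simp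
  fin_cases i <;> fin_cases j <;>
    simp only [LinearMap.compr₂_apply, LinearMap.compl₁₂_apply, cubicMulₗ_apply, hb₀, hb₁, hb₂,
      Fin.zero_eta, Fin.mk_one, Fin.reduceFinMk, he, cubicMul_one_left, cubicMul_one_right,
      cubicMul_alpha_alpha, cubicMul_alpha_beta, cubicMul_beta_beta, hαα, hαβ, hββ]
  rw [cubicMul_comm, cubicMul_alpha_beta, cubicMul_comm, hαβ]

section Substitution

variable (l m a b c d : R)

/-- The matrix whose columns are the coordinates of `1`, `l + aα + bβ` and `m + cα + dβ` in the
basis `(1, α, β)`. -/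
def substMatrix : Matrix (Fin 3) (Fin 3) R := !![1, l, m; 0, a, c; 0, b, d]

theorem det_substMatrix : (substMatrix l m a b c d).det = a * d - b * c := by
  simp [substMatrix, det_fin_three]; ring

@[simp]
theorem substMatrix_mulVec (x : Fin 3 → R) :
    substMatrix l m a b c d *ᵥ x
      = ![x 0 + l * x 1 + m * x 2, a * x 1 + c * x 2, b * x 1 + d * x 2] := by
  ext i; fin_cases i <;> simp [substMatrix, mulVec, dotProduct, Fin.sum_univ_three]

end Substitution

theorem substMatrix_alpha_beta {f₀ f₁ f₂ f₃ f₀' f₃' l m a b c d : R}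
    (hD : IsUnit (a * d - b * c))
    (hl : (a * d - b * c) * l =
      f₃ * a ^ 2 * c + f₂ * a * b * c + f₁ * a * b * d + f₀ * b ^ 2 * d)
    (hm : (a * d - b * c) * m =
      -(f₃ * a * c ^ 2 + f₂ * a * c * d + f₁ * b * c * d + f₀ * b * d ^ 2))
    (h3 : (a * d - b * c) * f₃' =
      f₃ * a ^ 3 + f₂ * a ^ 2 * b + f₁ * a * b ^ 2 + f₀ * b ^ 3)
    (h0 : (a * d - b * c) * f₀' =
      f₃ * c ^ 3 + f₂ * c ^ 2 * d + f₁ * c * d ^ 2 + f₀ * d ^ 3) :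
    cubicMul f₀ f₁ f₂ f₃ (substMatrix l m a b c d *ᵥ ![0, 1, 0])
      (substMatrix l m a b c d *ᵥ ![0, 0, 1])
      = substMatrix l m a b c d *ᵥ ![-(f₀' * f₃'), 0, 0] := by
  simp only [substMatrix_mulVec, cubicMul, cons_val_zero, cons_val_one, cons_val_two, tail_cons,
    head_cons]
  -- after multiplying by `(ad - bc)²`, each product of two primed quantities is a product of two
  -- of the hypotheses
  refine vec3_eq ?_ ?_ ?_ <;> apply (hD.pow 2).mul_left_cancel
  · linear_combination congr($hl * $hm) + congr($h0 * $h3)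
  · linear_combination (a * d - b * c) * (c * hl + a * hm)
  · linear_combination (a * d - b * c) * (d * hl + b * hm)

theorem substMatrix_alpha_alpha {f₀ f₁ f₂ f₃ f₁' f₂' f₃' l m a b c d : R}
    (hD : IsUnit (a * d - b * c))
    (hl : (a * d - b * c) * l =
      f₃ * a ^ 2 * c + f₂ * a * b * c + f₁ * a * b * d + f₀ * b ^ 2 * d)
    (hm : (a * d - b * c) * m =
      -(f₃ * a * c ^ 2 + f₂ * a * c * d + f₁ * b * c * d + f₀ * b * d ^ 2))
    (h3 : (a * d - b * c) * f₃' =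
      f₃ * a ^ 3 + f₂ * a ^ 2 * b + f₁ * a * b ^ 2 + f₀ * b ^ 3)
    (h2 : (a * d - b * c) * f₂' = 3 * f₃ * a ^ 2 * c + f₂ * (a ^ 2 * d + 2 * a * b * c)
            + f₁ * (2 * a * b * d + b ^ 2 * c) + 3 * f₀ * b ^ 2 * d)
    (h1 : (a * d - b * c) * f₁' = 3 * f₃ * a * c ^ 2 + f₂ * (2 * a * c * d + b * c ^ 2)
            + f₁ * (a * d ^ 2 + 2 * b * c * d) + 3 * f₀ * b * d ^ 2) :
    cubicMul f₀ f₁ f₂ f₃ (substMatrix l m a b c d *ᵥ ![0, 1, 0])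
      (substMatrix l m a b c d *ᵥ ![0, 1, 0])
      = substMatrix l m a b c d *ᵥ ![-(f₁' * f₃'), f₂', -f₃'] := by
  simp only [substMatrix_mulVec, cubicMul, cons_val_zero, cons_val_one, cons_val_two, tail_cons,
    head_cons]
  refine vec3_eq ?_ ?_ ?_ <;> apply (hD.pow 2).mul_left_cancel
  · linear_combination congr($hl * $hl) + congr($h1 * $h3) - congr($hl * $h2) + congr($hm * $h3)
  · linear_combination (a * d - b * c) * (2 * a * hl - a * h2 + c * h3)
  · linear_combination (a * d - b * c) * (2 * b * hl - b * h2 + d * h3)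

theorem substMatrix_beta_beta {f₀ f₁ f₂ f₃ f₀' f₁' f₂' l m a b c d : R}
    (hD : IsUnit (a * d - b * c))
    (hl : (a * d - b * c) * l =
      f₃ * a ^ 2 * c + f₂ * a * b * c + f₁ * a * b * d + f₀ * b ^ 2 * d)
    (hm : (a * d - b * c) * m =
      -(f₃ * a * c ^ 2 + f₂ * a * c * d + f₁ * b * c * d + f₀ * b * d ^ 2))
    (h2 : (a * d - b * c) * f₂' = 3 * f₃ * a ^ 2 * c + f₂ * (a ^ 2 * d + 2 * a * b * c)
            + f₁ * (2 * a * b * d + b ^ 2 * c) + 3 * f₀ * b ^ 2 * d)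
    (h1 : (a * d - b * c) * f₁' = 3 * f₃ * a * c ^ 2 + f₂ * (2 * a * c * d + b * c ^ 2)
            + f₁ * (a * d ^ 2 + 2 * b * c * d) + 3 * f₀ * b * d ^ 2)
    (h0 : (a * d - b * c) * f₀' =
      f₃ * c ^ 3 + f₂ * c ^ 2 * d + f₁ * c * d ^ 2 + f₀ * d ^ 3) :
    cubicMul f₀ f₁ f₂ f₃ (substMatrix l m a b c d *ᵥ ![0, 0, 1])
      (substMatrix l m a b c d *ᵥ ![0, 0, 1])
      = substMatrix l m a b c d *ᵥ ![-(f₀' * f₂'), f₀', -f₁'] := by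
  simp only [substMatrix_mulVec, cubicMul, cons_val_zero, cons_val_one, cons_val_two, tail_cons,
    head_cons]
  refine vec3_eq ?_ ?_ ?_ <;> apply (hD.pow 2).mul_left_cancel
  · linear_combination congr($hm * $hm) + congr($h0 * $h2) - congr($hl * $h0) + congr($hm * $h1)
  · linear_combination (a * d - b * c) * (2 * c * hm - a * h0 + c * h1)
  · linear_combination (a * d - b * c) * (2 * d * hm - b * h0 + d * h1)

end

/-- Let `A = ((a,b),(c,d)) ∈ GL₂(R)` (so its determinant `a*d - b*c` is a unit `u`), and
let `f' = A∗f = (det A)⁻¹ · f(aY₁ + cY₂, bY₁ + dY₂)` be the twist of the binary cubic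
form `f = f₃Y₁³ + f₂Y₁²Y₂ + f₁Y₁Y₂² + f₀Y₂³` (its coefficients `f₀', f₁', f₂', f₃'` are
pinned down by the four displayed equations, obtained by expanding
`f(aY₁ + cY₂, bY₁ + dY₂)` and dividing by `det A`).  Then the cubic ring `S_{A∗f}` is
isomorphic as an `R`-algebra to `S_f`:  there is an `R`-linear equivalence of the
underlying modules carrying `1` to `1` and intertwining the two multiplications. -/
theorem stmt_5 (R : Type*) [CommRing R] (f₀ f₁ f₂ f₃ f₀' f₁' f₂' f₃' a b c d : R)
    (u : Rˣ) (hdet : (u : R) = a * d - b * c)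
    (h3 : (u : R) * f₃' = f₃ * a ^ 3 + f₂ * a ^ 2 * b + f₁ * a * b ^ 2 + f₀ * b ^ 3)
    (h2 : (u : R) * f₂' = 3 * f₃ * a ^ 2 * c + f₂ * (a ^ 2 * d + 2 * a * b * c)
            + f₁ * (2 * a * b * d + b ^ 2 * c) + 3 * f₀ * b ^ 2 * d)
    (h1 : (u : R) * f₁' = 3 * f₃ * a * c ^ 2 + f₂ * (2 * a * c * d + b * c ^ 2)
            + f₁ * (a * d ^ 2 + 2 * b * c * d) + 3 * f₀ * b * d ^ 2)
    (h0 : (u : R) * f₀' = f₃ * c ^ 3 + f₂ * c ^ 2 * d + f₁ * c * d ^ 2 + f₀ * d ^ 3) :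
    ∃ e : (Fin 3 → R) ≃ₗ[R] (Fin 3 → R),
      e ![1, 0, 0] = ![1, 0, 0] ∧
      ∀ x y : Fin 3 → R,
        e (cubicMul f₀' f₁' f₂' f₃' x y) = cubicMul f₀ f₁ f₂ f₃ (e x) (e y) := by
  have hD : IsUnit (a * d - b * c) := hdet ▸ u.isUnit
  rw [hdet] at h0 h1 h2 h3
  -- `l` and `m` solve the two linear equations saying that `α'β'` has no `α`- and `β`-component
  obtain ⟨l, hl⟩ : a * d - b * c ∣
      f₃ * a ^ 2 * c + f₂ * a * b * c + f₁ * a * b * d + f₀ * b ^ 2 * d := hD.dvd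
  obtain ⟨m, hm⟩ : a * d - b * c ∣
      -(f₃ * a * c ^ 2 + f₂ * a * c * d + f₁ * b * c * d + f₀ * b * d ^ 2) := hD.dvd
  have hP : IsUnit (substMatrix l m a b c d).det := by rwa [det_substMatrix]
  have he : Matrix.toLin' (substMatrix l m a b c d) ![1, 0, 0] = ![1, 0, 0] := by simp
  refine ⟨Matrix.toLinearEquiv' _ (Matrix.invertibleOfIsUnitDet _ hP), he,
    map_cubicMul_of_mul_table _ he ?_ ?_ ?_⟩
  · exact substMatrix_alpha_alpha hD hl.symm hm.symm h3 h2 h1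
  · exact substMatrix_alpha_beta hD hl.symm hm.symm h3 h0
  · exact substMatrix_beta_beta hD hl.symm hm.symm h2 h1 h0
end

section
/- Let R be a commutative ring and f₀, f₁, f₂, f₃ ∈ R. In the quotient ring R[y]/(f₃y³ + f₂y² + f₁y + f₀), set u = f₃y and w = f₃y² + f₂y + f₁. Then the following identities hold: u·w = −f₀f₃, u² = −f₁f₃ − f₂·u + f₃·w, and w² = −f₀f₂ − f₀·u + f₁·w. Consequently the R-submodule R·1 + R·u + R·w is an R-subalgebra of R[y]/(f₃y³ + f₂y² + f₁y + f₀), and u and w are integral over R, satisfying the monic equations u³ + f₂u² + f₁f₃u + f₀f₃² = 0 and w³ − f₁w² + f₀f₂w − f₀²f₃ = 0. -/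
lemma my_span_mul_closed {R A : Type*} [CommSemiring R] [CommRing A] [Algebra R A]
    (u w : A)
    (huu : u * u ∈ Submodule.span R ({1, u, w} : Set A))
    (huw : u * w ∈ Submodule.span R ({1, u, w} : Set A))
    (hww : w * w ∈ Submodule.span R ({1, u, w} : Set A)) :
    ∀ x ∈ Submodule.span R ({1, u, w} : Set A),
      ∀ y ∈ Submodule.span R ({1, u, w} : Set A),
        x * y ∈ Submodule.span R ({1, u, w} : Set A) := by
  set S := Submodule.span R ({1, u, w} : Set A) with hS
  have huS : u ∈ S := Submodule.subset_span (by simp)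
  have hwS : w ∈ S := Submodule.subset_span (by simp)
  have gen : ∀ x ∈ ({1, u, w} : Set A), ∀ y ∈ S, x * y ∈ S := by
    rintro x (rfl | rfl | rfl) y hy
    · simpa using hy
    · induction hy using Submodule.span_induction with
      | mem z hz =>
        rcases hz with rfl | rfl | rfl
        · simpa using huS
        · exact huu
        · exact huw
      | zero => simpa using S.zero_mem
      | add a b _ _ ha' hb' => rw [mul_add]; exact add_mem ha' hb'
      | smul r a _ ha' => rw [mul_smul_comm]; exact S.smul_mem _ ha'
    · induction hy using Submodule.span_induction with
      | mem z hz =>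
        rcases hz with rfl | rfl | rfl
        · simpa using hwS
        · rw [mul_comm]; exact huw
        · exact hww
      | zero => simpa using S.zero_mem
      | add a b _ _ ha' hb' => rw [mul_add]; exact add_mem ha' hb'
      | smul r a _ ha' => rw [mul_smul_comm]; exact S.smul_mem _ ha'
  intro x hx y hy
  induction hx using Submodule.span_induction with
  | mem z hz => exact gen z hz y hy
  | zero => simpa using S.zero_mem
  | add a b _ _ ha' hb' => rw [add_mul]; exact add_mem ha' hb'
  | smul r a _ ha' => rw [smul_mul_assoc]; exact S.smul_mem _ ha'



open Polynomial in
/-- Let `R` be a commutative ring and `f₀, f₁, f₂, f₃ ∈ R`.  In the quotient ring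
`R[y]/(f₃y³ + f₂y² + f₁y + f₀)` set `u = f₃·y` and `w = f₃y² + f₂y + f₁`.  Then
`u·w = −f₀f₃`, `u² = −f₁f₃ − f₂·u + f₃·w` and `w² = −f₀f₂ − f₀·u + f₁·w`; consequently
`R·1 + R·u + R·w` is an `R`-subalgebra (it contains `1` and is closed under
multiplication), and `u`, `w` are integral over `R`, satisfying the monic equations
`u³ + f₂u² + f₁f₃u + f₀f₃² = 0` and `w³ − f₁w² + f₀f₂w − f₀²f₃ = 0`. -/
theorem stmt_7 (R : Type*) [CommRing R] (f₀ f₁ f₂ f₃ : R)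
    (P : Polynomial R)
    (hP : P = C f₃ * X ^ 3 + C f₂ * X ^ 2 + C f₁ * X + C f₀)
    (u w : Polynomial R ⧸ Ideal.span {P})
    (hu : u = Ideal.Quotient.mk (Ideal.span {P}) (C f₃ * X))
    (hw : w = Ideal.Quotient.mk (Ideal.span {P}) (C f₃ * X ^ 2 + C f₂ * X + C f₁)) :
    (u * w = algebraMap R _ (-(f₀ * f₃))) ∧
    (u ^ 2 = algebraMap R _ (-(f₁ * f₃)) - algebraMap R _ f₂ * u
        + algebraMap R _ f₃ * w) ∧
    (w ^ 2 = algebraMap R _ (-(f₀ * f₂)) - algebraMap R _ f₀ * u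
        + algebraMap R _ f₁ * w) ∧
    ((1 : Polynomial R ⧸ Ideal.span {P}) ∈
        Submodule.span R ({1, u, w} : Set (Polynomial R ⧸ Ideal.span {P})) ∧
      ∀ x ∈ Submodule.span R ({1, u, w} : Set (Polynomial R ⧸ Ideal.span {P})),
        ∀ y ∈ Submodule.span R ({1, u, w} : Set (Polynomial R ⧸ Ideal.span {P})),
          x * y ∈ Submodule.span R ({1, u, w} : Set (Polynomial R ⧸ Ideal.span {P}))) ∧
    IsIntegral R u ∧ IsIntegral R w ∧
    (u ^ 3 + algebraMap R _ f₂ * u ^ 2 + algebraMap R _ (f₁ * f₃) * u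
        + algebraMap R _ (f₀ * f₃ ^ 2) = 0) ∧
    (w ^ 3 - algebraMap R _ f₁ * w ^ 2 + algebraMap R _ (f₀ * f₂) * w
        - algebraMap R _ (f₀ ^ 2 * f₃) = 0) := by
  have ha : ∀ r : R, algebraMap R (Polynomial R ⧸ Ideal.span {P}) r
      = Ideal.Quotient.mk (Ideal.span {P}) (C r) := fun r => rfl
  have h1 : u * w = algebraMap R _ (-(f₀ * f₃)) := by
    rw [hu, hw, ha, ← map_mul, Ideal.Quotient.eq]
    refine Ideal.mem_span_singleton.mpr ⟨C f₃, ?_⟩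
    rw [hP]; simp only [map_neg, map_mul, map_pow]; ring
  have h2 : u ^ 2 = algebraMap R _ (-(f₁ * f₃)) - algebraMap R _ f₂ * u
      + algebraMap R _ f₃ * w := by
    rw [hu, hw, ha, ha, ha, ← map_pow, ← map_mul, ← map_mul, ← map_sub, ← map_add,
      Ideal.Quotient.eq]
    refine Ideal.mem_span_singleton.mpr ⟨0, ?_⟩
    rw [hP]; simp only [map_neg, map_mul, map_pow]; ring
  have h3 : w ^ 2 = algebraMap R _ (-(f₀ * f₂)) - algebraMap R _ f₀ * u
      + algebraMap R _ f₁ * w := by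
    rw [hu, hw, ha, ha, ha, ← map_pow, ← map_mul, ← map_mul, ← map_sub, ← map_add,
      Ideal.Quotient.eq]
    refine Ideal.mem_span_singleton.mpr ⟨C f₃ * X + C f₂, ?_⟩
    rw [hP]; simp only [map_neg, map_mul, map_pow]; ring
  have hu3 : u ^ 3 + algebraMap R _ f₂ * u ^ 2 + algebraMap R _ (f₁ * f₃) * u
      + algebraMap R _ (f₀ * f₃ ^ 2) = 0 := by
    simp only [map_neg, map_mul, map_pow] at h1 h2 ⊢
    linear_combination u * h2 + algebraMap R (Polynomial R ⧸ Ideal.span {P}) f₃ * h1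
  have hw3 : w ^ 3 - algebraMap R _ f₁ * w ^ 2 + algebraMap R _ (f₀ * f₂) * w
      - algebraMap R _ (f₀ ^ 2 * f₃) = 0 := by
    simp only [map_neg, map_mul, map_pow] at h1 h3 ⊢
    linear_combination w * h3 - algebraMap R (Polynomial R ⧸ Ideal.span {P}) f₀ * h1
  have h1S : (1 : Polynomial R ⧸ Ideal.span {P}) ∈
      Submodule.span R ({1, u, w} : Set (Polynomial R ⧸ Ideal.span {P})) :=
    Submodule.subset_span (by simp)
  have huS : u ∈ Submodule.span R ({1, u, w} : Set (Polynomial R ⧸ Ideal.span {P})) :=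
    Submodule.subset_span (by simp)
  have hwS : w ∈ Submodule.span R ({1, u, w} : Set (Polynomial R ⧸ Ideal.span {P})) :=
    Submodule.subset_span (by simp)
  have hsm : ∀ (r : R) (x : Polynomial R ⧸ Ideal.span {P}),
      x ∈ Submodule.span R ({1, u, w} : Set (Polynomial R ⧸ Ideal.span {P})) →
      algebraMap R (Polynomial R ⧸ Ideal.span {P}) r * x ∈
        Submodule.span R ({1, u, w} : Set (Polynomial R ⧸ Ideal.span {P})) :=
    fun r x hx => Algebra.smul_def r x ▸ Submodule.smul_mem _ r hx
  refine ⟨h1, h2, h3, ⟨h1S, ?_⟩, ?_, ?_, hu3, hw3⟩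
  · refine my_span_mul_closed u w ?_ ?_ ?_
    · have he : u * u = algebraMap R _ (-(f₁ * f₃)) * 1 + algebraMap R _ (-f₂) * u
          + algebraMap R _ f₃ * w := by
        simp only [map_neg, map_mul, mul_one]
        simp only [map_neg, map_mul] at h2
        linear_combination h2
      rw [he]
      exact add_mem (add_mem (hsm _ _ h1S) (hsm _ _ huS)) (hsm _ _ hwS)
    · have he : u * w = algebraMap R _ (-(f₀ * f₃)) * 1 := by rw [mul_one]; exact h1
      rw [he]; exact hsm _ _ h1S
    · have he : w * w = algebraMap R _ (-(f₀ * f₂)) * 1 + algebraMap R _ (-f₀) * u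
          + algebraMap R _ f₁ * w := by
        simp only [map_neg, map_mul, mul_one]
        simp only [map_neg, map_mul] at h3
        linear_combination h3
      rw [he]
      exact add_mem (add_mem (hsm _ _ h1S) (hsm _ _ huS)) (hsm _ _ hwS)
  · refine ⟨X ^ 3 + (C f₂ * X ^ 2 + C (f₁ * f₃) * X + C (f₀ * f₃ ^ 2)), ?_, ?_⟩
    · apply Polynomial.monic_X_pow_add
      exact lt_of_le_of_lt (by compute_degree) (by norm_num)
    · simp only [eval₂_add, eval₂_mul, eval₂_pow, eval₂_X, eval₂_C]
      linear_combination hu3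
  · refine ⟨X ^ 3 + (C (-f₁) * X ^ 2 + C (f₀ * f₂) * X + C (-(f₀ ^ 2 * f₃))), ?_, ?_⟩
    · apply Polynomial.monic_X_pow_add
      exact lt_of_le_of_lt (by compute_degree) (by norm_num)
    · simp only [eval₂_add, eval₂_mul, eval₂_pow, eval₂_X, eval₂_C, eval₂_neg, map_neg]
      linear_combination hw3
end

section
/- Let R be an integral domain with fraction field K, and let f = f₃Y₁³ + f₂Y₁²Y₂ + f₁Y₁Y₂² + f₀Y₂³ be a nonzero binary cubic form over R. Then the associated cubic ring S_f is an integral domain if and only if f is irreducible as a homogeneous polynomial in K[Y₁, Y₂]. -/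
/-!
`S_f` has no torsion over `R`, so clearing denominators shows that it has zero divisors exactly
when `S_f ⊗ K` has. Over `K`, a zero `(r : s)` of `f` in `ℙ¹(K)` produces the zero divisors
`(f₃r + sα)(−f₃r² − f₂rs + rsα + s²β) = 0` (or `α(α − f₂) = 0` if `s = 0`). If `f` has no such
zero, then `f₃ ≠ 0` and `α ↦ θ` embeds `S_f ⊗ K` into `K[θ]/(g)` with `g(θ) = −f(−θ, f₃)/f₃`,
a cubic without roots, hence a field. Finally, a binary cubic form over `K` is reducible iff it
has a linear factor iff it has a zero in `ℙ¹(K)`; for the harder implication, a factorization of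
`f` maps to one of its dehomogenization `f(x, 1)`, which is an irreducible cubic, and comparing
degrees shows that one factor of `f` is constant.
-/

namespace BinaryCubic

section Form

open MvPolynomial

variable {R : Type*} [CommRing R]

noncomputable def form (f₀ f₁ f₂ f₃ : R) : MvPolynomial (Fin 2) R :=
  C f₃ * X 0 ^ 3 + C f₂ * X 0 ^ 2 * X 1 + C f₁ * X 0 * X 1 ^ 2 + C f₀ * X 1 ^ 3

@[simp]
lemma eval_form (f₀ f₁ f₂ f₃ u v : R) :
    eval ![u, v] (form f₀ f₁ f₂ f₃)
      = f₃ * u ^ 3 + f₂ * u ^ 2 * v + f₁ * u * v ^ 2 + f₀ * v ^ 3 := by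
  simp [form]

lemma isHomogeneous_form (f₀ f₁ f₂ f₃ : R) : (form f₀ f₁ f₂ f₃).IsHomogeneous 3 := by
  refine (((isHomogeneous_C_mul_X_pow _ _ _).add ?_).add ?_).add (isHomogeneous_C_mul_X_pow _ _ _)
  · exact (isHomogeneous_C_mul_X_pow f₂ 0 2).mul (isHomogeneous_X R 1)
  · exact (isHomogeneous_C_mul_X f₁ 0).mul (isHomogeneous_X_pow 1 2)

def Anisotropic (F : MvPolynomial (Fin 2) R) : Prop :=
  ∀ u v : R, eval ![u, v] F = 0 → u = 0 ∧ v = 0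

lemma ne_zero_of_anisotropic_form [Nontrivial R] {f₀ f₁ f₂ f₃ : R}
    (h : Anisotropic (form f₀ f₁ f₂ f₃)) : f₃ ≠ 0 :=
  fun hf₃ => one_ne_zero (h 1 0 (by simp [hf₃])).1

noncomputable abbrev dehomogenize : MvPolynomial (Fin 2) R →ₐ[R] Polynomial R :=
  aeval ![Polynomial.X, 1]

lemma dehomogenize_form (f₀ f₁ f₂ f₃ : R) :
    dehomogenize (form f₀ f₁ f₂ f₃) =
      Polynomial.C f₃ * Polynomial.X ^ 3 + Polynomial.C f₂ * Polynomial.X ^ 2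
        + Polynomial.C f₁ * Polynomial.X + Polynomial.C f₀ := by
  simp [form, Polynomial.C_eq_algebraMap]

lemma natDegree_dehomogenize_le (p : MvPolynomial (Fin 2) R) :
    (dehomogenize p).natDegree ≤ p.totalDegree := by
  conv_lhs => rw [p.as_sum, map_sum]
  refine Polynomial.natDegree_sum_le_of_forall_le _ _ fun m hm => ?_
  calc (dehomogenize (monomial m (coeff m p))).natDegree
      ≤ m 0 := by
        rw [aeval_monomial, Finsupp.prod_fintype _ _ fun _ => pow_zero _, Fin.prod_univ_two]
        simp only [Matrix.cons_val_zero, Matrix.cons_val_one, one_pow, mul_one,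
          ← Polynomial.C_eq_algebraMap]
        exact Polynomial.natDegree_C_mul_X_pow_le _ _
    _ ≤ m.degree := by simp [Finsupp.degree_eq_sum]
    _ ≤ p.totalDegree := le_totalDegree hm

lemma isUnit_of_isUnit_dehomogenize [IsDomain R] {F G H : MvPolynomial (Fin 2) R}
    (hF : F.totalDegree ≤ (dehomogenize F).natDegree) (hGH : F = G * H)
    (hG : IsUnit (dehomogenize G)) (hH : dehomogenize H ≠ 0) : IsUnit G := by
  have hG0 : G ≠ 0 := by rintro rfl; simp at hG
  have hH0 : H ≠ 0 := by rintro rfl; simp at hH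
  have hdeg : G.totalDegree + H.totalDegree ≤ (dehomogenize H).natDegree :=
    calc G.totalDegree + H.totalDegree = F.totalDegree := by
          rw [hGH, totalDegree_mul_of_isDomain hG0 hH0]
      _ ≤ (dehomogenize F).natDegree := hF
      _ = (dehomogenize G).natDegree + (dehomogenize H).natDegree := by
          rw [hGH, map_mul, Polynomial.natDegree_mul hG.ne_zero hH]
      _ = (dehomogenize H).natDegree := by
          rw [Polynomial.natDegree_eq_zero_of_isUnit hG, zero_add]
  have hGC : G = C (G.coeff 0) :=
    totalDegree_eq_zero_iff_eq_C.mp (by have := natDegree_dehomogenize_le H; omega)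
  rw [hGC, dehomogenize, aeval_C, ← Polynomial.C_eq_algebraMap, Polynomial.isUnit_C] at hG
  rw [hGC]
  exact hG.map C

lemma irreducible_of_irreducible_dehomogenize [IsDomain R] {F : MvPolynomial (Fin 2) R}
    (hF : Irreducible (dehomogenize F)) (hdeg : F.totalDegree ≤ (dehomogenize F).natDegree) :
    Irreducible F := by
  refine ⟨fun hu => hF.not_isUnit (hu.map _), fun G H hGH => ?_⟩
  have hψ : dehomogenize F = dehomogenize G * dehomogenize H := by rw [hGH, map_mul]
  rcases hF.isUnit_or_isUnit hψ with hG | hH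
  · exact .inl <| isUnit_of_isUnit_dehomogenize hdeg hGH hG
      (right_ne_zero_of_mul (hψ ▸ hF.ne_zero))
  · exact .inr <| isUnit_of_isUnit_dehomogenize hdeg (hGH.trans (mul_comm G H)) hH
      (left_ne_zero_of_mul (hψ ▸ hF.ne_zero))

lemma not_isUnit_of_constantCoeff_eq_zero {σ : Type*} [Nontrivial R] {p : MvPolynomial σ R}
    (hp : constantCoeff p = 0) : ¬IsUnit p :=
  fun hu => not_isUnit_zero (hp ▸ hu.map constantCoeff)

variable {K : Type*} [Field K]

lemma not_irreducible_form_of_eval_eq_zero {e₀ e₁ e₂ e₃ u v : K}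
    (huv : ¬(u = 0 ∧ v = 0)) (hroot : eval ![u, v] (form e₀ e₁ e₂ e₃) = 0) :
    ¬Irreducible (form e₀ e₁ e₂ e₃) := by
  rw [eval_form] at hroot
  intro hirr
  by_cases hv : v = 0
  · have he₃ : e₃ = 0 := by
      subst hv
      have hu : u ≠ 0 := by tauto
      simpa [hu] using hroot
    have hfac : form e₀ e₁ e₂ e₃
        = X 1 * (C e₂ * X 0 ^ 2 + C e₁ * X 0 * X 1 + C e₀ * X 1 ^ 2) := by
      rw [form, he₃, C_0]
      ring
    refine (hirr.isUnit_or_isUnit hfac).elim ?_ ?_ <;>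
      exact not_isUnit_of_constantCoeff_eq_zero (by simp)
  · set t := u / v
    have he₀ : e₀ = -(e₃ * t ^ 3 + e₂ * t ^ 2 + e₁ * t) := by
      have hv3 : v ^ 3 * (e₃ * t ^ 3 + e₂ * t ^ 2 + e₁ * t + e₀) = 0 := by
        simp only [t]
        field_simp
        linear_combination hroot
      linear_combination (mul_eq_zero.mp hv3).resolve_left (pow_ne_zero 3 hv)
    have hfac : form e₀ e₁ e₂ e₃ = (X 0 - C t * X 1) * (C e₃ * X 0 ^ 2
        + C (e₂ + e₃ * t) * X 0 * X 1 + C (e₁ + e₂ * t + e₃ * t ^ 2) * X 1 ^ 2) := by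
      rw [form, he₀]
      simp only [map_neg, map_add, map_mul, map_pow]
      ring
    refine (hirr.isUnit_or_isUnit hfac).elim ?_ ?_ <;>
      exact not_isUnit_of_constantCoeff_eq_zero (by simp)

lemma irreducible_form_of_anisotropic {e₀ e₁ e₂ e₃ : K}
    (h : Anisotropic (form e₀ e₁ e₂ e₃)) : Irreducible (form e₀ e₁ e₂ e₃) := by
  have hdeg : (dehomogenize (form e₀ e₁ e₂ e₃)).natDegree = 3 := by
    rw [dehomogenize_form, Polynomial.natDegree_cubic (ne_zero_of_anisotropic_form h)]
  refine irreducible_of_irreducible_dehomogenize ?_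
    (hdeg ▸ (isHomogeneous_form ..).totalDegree_le)
  refine Polynomial.irreducible_of_degree_le_three_of_not_isRoot (by simp [hdeg]) fun x hx => ?_
  exact one_ne_zero (h x 1 (by simpa [dehomogenize_form] using hx)).2

lemma irreducible_form_iff_anisotropic {e₀ e₁ e₂ e₃ : K} :
    Irreducible (form e₀ e₁ e₂ e₃) ↔ Anisotropic (form e₀ e₁ e₂ e₃) :=
  ⟨fun hirr _ _ hroot => not_not.mp fun huv => not_irreducible_form_of_eval_eq_zero huv hroot hirr,
    irreducible_form_of_anisotropic⟩

end Form

section CubicRing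

variable {R : Type*} [CommRing R]

def CubicNoZeroDivisors (f₀ f₁ f₂ f₃ : R) : Prop :=
  ∀ x y : Fin 3 → R, cubicMul f₀ f₁ f₂ f₃ x y = 0 → x = 0 ∨ y = 0

lemma cubicMul_map {S : Type*} [CommRing S] (φ : R →+* S) (f₀ f₁ f₂ f₃ : R) (x y : Fin 3 → R) :
    cubicMul (φ f₀) (φ f₁) (φ f₂) (φ f₃) (φ ∘ x) (φ ∘ y) = φ ∘ cubicMul f₀ f₁ f₂ f₃ x y := by
  funext i
  fin_cases i <;> simp [cubicMul]

lemma cubicMul_smul (f₀ f₁ f₂ f₃ a b : R) (x y : Fin 3 → R) :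
    cubicMul f₀ f₁ f₂ f₃ (a • x) (b • y) = (a * b) • cubicMul f₀ f₁ f₂ f₃ x y := by
  funext i
  fin_cases i <;>
    simp only [cubicMul, Fin.isValue, Pi.smul_apply, smul_eq_mul, Fin.zero_eta, Fin.mk_one,
      Fin.reduceFinMk, Matrix.cons_val_zero, Matrix.cons_val_one, Matrix.cons_val] <;>
    ring

lemma cubicMul_eq_zero_of_root {f₀ f₁ f₂ f₃ r s : R}
    (hroot : f₃ * r ^ 3 + f₂ * r ^ 2 * s + f₁ * r * s ^ 2 + f₀ * s ^ 3 = 0) :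
    cubicMul f₀ f₁ f₂ f₃ ![f₃ * r, s, 0] ![-(f₃ * r ^ 2) - f₂ * (r * s), r * s, s ^ 2] = 0 := by
  funext i
  fin_cases i <;>
    simp only [cubicMul, Fin.isValue, Matrix.cons_val_zero, Matrix.cons_val_one, Matrix.cons_val,
      zero_mul, add_zero, mul_zero, sub_zero, Fin.zero_eta, Fin.mk_one, Fin.reduceFinMk,
      Pi.zero_apply]
  · linear_combination (-f₃) * hroot
  all_goals ring

lemma cubicMul_eq_zero_of_f₃_eq_zero (f₀ f₁ f₂ : R) :
    cubicMul f₀ f₁ f₂ 0 ![0, 1, 0] ![-f₂, 1, 0] = 0 := by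
  funext i
  fin_cases i <;> simp [cubicMul]

lemma anisotropic_of_cubicNoZeroDivisors [IsDomain R] {f₀ f₁ f₂ f₃ : R}
    (h : CubicNoZeroDivisors f₀ f₁ f₂ f₃) : Anisotropic (form f₀ f₁ f₂ f₃) := by
  intro r s hroot
  rw [eval_form] at hroot
  by_contra hrs
  by_cases hs : s = 0
  · have hf₃ : f₃ = 0 := by
      subst hs
      have hr : r ≠ 0 := by tauto
      simpa [hr] using hroot
    subst hf₃
    rcases h _ _ (cubicMul_eq_zero_of_f₃_eq_zero f₀ f₁ f₂) with h | h <;>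
      simpa using congrFun h 1
  · rcases h _ _ (cubicMul_eq_zero_of_root hroot) with h | h
    · exact hs (by simpa using congrFun h 1)
    · exact hs (by simpa using congrFun h 2)

end CubicRing

section Embedding

open Polynomial

variable {K : Type*} [Field K]

/-- `embedding e₁ e₂ e₃ z / e₃` is the image of `z = z₀ + z₁α + z₂β` under the embedding
`S_f ⊗ K → K[θ]/(monicCubic e₀ e₁ e₂ e₃)`, `α ↦ θ`, `β ↦ (−e₁e₃ + e₂θ − θ²)/e₃`. -/
noncomputable def embedding (e₁ e₂ e₃ : K) (z : Fin 3 → K) : K[X] :=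
  C (e₃ * z 0 - e₁ * e₃ * z 2) + C (e₃ * z 1 + e₂ * z 2) * X - C (z 2) * X ^ 2

/-- `−f(−θ, e₃)/e₃`; eliminating `β` from `α² = −e₁e₃ + e₂α − e₃β` and `αβ = −e₀e₃` shows
that it kills `α`. -/
noncomputable def monicCubic (e₀ e₁ e₂ e₃ : K) : K[X] :=
  X ^ 3 - C e₂ * X ^ 2 + C (e₁ * e₃) * X - C (e₀ * e₃ ^ 2)

lemma embedding_mul (e₀ e₁ e₂ e₃ : K) (a b : Fin 3 → K) :
    embedding e₁ e₂ e₃ a * embedding e₁ e₂ e₃ b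
      = (C (a 2 * b 2) * X - C (e₃ * (a 2 * b 1 + a 1 * b 2) + e₂ * (a 2 * b 2)))
          * monicCubic e₀ e₁ e₂ e₃
        + C e₃ * embedding e₁ e₂ e₃ (cubicMul e₀ e₁ e₂ e₃ a b) := by
  simp only [embedding, monicCubic, cubicMul, Matrix.cons_val_zero, Matrix.cons_val_one,
    Matrix.cons_val_two, Matrix.tail_cons, Matrix.head_cons, map_add, map_sub, map_mul, map_pow]
  ring

lemma natDegree_embedding_le (e₁ e₂ e₃ : K) (z : Fin 3 → K) :
    (embedding e₁ e₂ e₃ z).natDegree ≤ 2 := by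
  unfold embedding
  compute_degree

lemma eq_zero_of_embedding_eq_zero {e₁ e₂ e₃ : K} (he₃ : e₃ ≠ 0) {z : Fin 3 → K}
    (hz : embedding e₁ e₂ e₃ z = 0) : z = 0 := by
  have h2 : z 2 = 0 := by simpa [embedding] using congrArg (coeff · 2) hz
  have h1 : z 1 = 0 := by simpa [embedding, h2, he₃] using congrArg (coeff · 1) hz
  have h0 : z 0 = 0 := by simpa [embedding, h2, he₃] using congrArg (coeff · 0) hz
  funext i
  fin_cases i <;> assumption

lemma natDegree_monicCubic (e₀ e₁ e₂ e₃ : K) : (monicCubic e₀ e₁ e₂ e₃).natDegree = 3 := by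
  unfold monicCubic
  compute_degree!

lemma irreducible_monicCubic {e₀ e₁ e₂ e₃ : K} (h : Anisotropic (form e₀ e₁ e₂ e₃)) :
    Irreducible (monicCubic e₀ e₁ e₂ e₃) := by
  refine irreducible_of_degree_le_three_of_not_isRoot (by simp [natDegree_monicCubic])
    fun θ hθ => ne_zero_of_anisotropic_form h (h (-θ) e₃ ?_).2
  simp only [IsRoot, monicCubic, eval_sub, eval_add, eval_mul, eval_pow, eval_C, eval_X] at hθ
  rw [eval_form]
  linear_combination -e₃ * hθ

lemma cubicNoZeroDivisors_of_anisotropic {e₀ e₁ e₂ e₃ : K} (h : Anisotropic (form e₀ e₁ e₂ e₃)) :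
    CubicNoZeroDivisors e₀ e₁ e₂ e₃ := by
  intro a b hab
  have hdvd : monicCubic e₀ e₁ e₂ e₃ ∣ embedding e₁ e₂ e₃ a * embedding e₁ e₂ e₃ b := by
    rw [embedding_mul, hab]
    simp [embedding]
  have hsmall (z : Fin 3 → K) :
      (embedding e₁ e₂ e₃ z).natDegree < (monicCubic e₀ e₁ e₂ e₃).natDegree := by
    rw [natDegree_monicCubic]
    exact (natDegree_embedding_le e₁ e₂ e₃ z).trans_lt (by norm_num)
  refine ((irreducible_monicCubic h).prime.dvd_or_dvd hdvd).imp ?_ ?_ <;>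
    exact fun hd => eq_zero_of_embedding_eq_zero (ne_zero_of_anisotropic_form h)
      (eq_zero_of_dvd_of_natDegree_lt hd (hsmall _))

end Embedding

section FractionRing

variable {R K : Type*} [CommRing R] [Field K] [Algebra R K] [IsFractionRing R K]

lemma exists_integer_multiple [IsDomain R] (x : Fin 3 → K) :
    ∃ b : R, algebraMap R K b ≠ 0 ∧
      ∃ x' : Fin 3 → R, algebraMap R K ∘ x' = algebraMap R K b • x := by
  obtain ⟨b, hb⟩ := IsLocalization.exist_integer_multiples_of_finite (nonZeroDivisors R) x
  choose x' hx' using hb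
  refine ⟨b, IsFractionRing.to_map_ne_zero_of_mem_nonZeroDivisors b.2, x', funext fun i => ?_⟩
  simp [hx', Algebra.smul_def]

lemma comp_algebraMap_eq_zero_iff {ι : Type*} {x : ι → R} :
    algebraMap R K ∘ x = 0 ↔ x = 0 := by
  simp [funext_iff]

lemma cubicNoZeroDivisors_iff_algebraMap [IsDomain R] {f₀ f₁ f₂ f₃ : R} :
    CubicNoZeroDivisors f₀ f₁ f₂ f₃ ↔ CubicNoZeroDivisors
      (algebraMap R K f₀) (algebraMap R K f₁) (algebraMap R K f₂) (algebraMap R K f₃) := by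
  constructor
  · intro h x y hxy
    obtain ⟨b, hb, x', hx'⟩ := exists_integer_multiple (R := R) x
    obtain ⟨c, hc, y', hy'⟩ := exists_integer_multiple (R := R) y
    have hxy' : cubicMul f₀ f₁ f₂ f₃ x' y' = 0 := by
      rw [← comp_algebraMap_eq_zero_iff (K := K), ← RingHom.coe_coe, ← cubicMul_map,
        RingHom.coe_coe, hx', hy', cubicMul_smul, hxy, smul_zero]
    refine (h x' y' hxy').imp (fun hx0 => ?_) (fun hy0 => ?_)
    · rwa [comp_algebraMap_eq_zero_iff.mpr hx0, eq_comm, smul_eq_zero_iff_right hb] at hx'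
    · rwa [comp_algebraMap_eq_zero_iff.mpr hy0, eq_comm, smul_eq_zero_iff_right hc] at hy'
  · intro h x y hxy
    refine (h (algebraMap R K ∘ x) (algebraMap R K ∘ y) ?_).imp ?_ ?_
    · rw [cubicMul_map, hxy, comp_algebraMap_eq_zero_iff]
    all_goals exact comp_algebraMap_eq_zero_iff.mp

end FractionRing

end BinaryCubic

open MvPolynomial in
theorem stmt_8_general (R K : Type*) [CommRing R] [IsDomain R] [Field K] [Algebra R K]
    [IsFractionRing R K] (f₀ f₁ f₂ f₃ : R) :
    (∀ x y : Fin 3 → R, cubicMul f₀ f₁ f₂ f₃ x y = 0 → x = 0 ∨ y = 0) ↔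
      Irreducible (C (algebraMap R K f₃) * X 0 ^ 3
        + C (algebraMap R K f₂) * X 0 ^ 2 * X 1
        + C (algebraMap R K f₁) * X 0 * X 1 ^ 2
        + C (algebraMap R K f₀) * X 1 ^ 3 : MvPolynomial (Fin 2) K) :=
  calc BinaryCubic.CubicNoZeroDivisors f₀ f₁ f₂ f₃
    _ ↔ BinaryCubic.CubicNoZeroDivisors (algebraMap R K f₀) (algebraMap R K f₁)
          (algebraMap R K f₂) (algebraMap R K f₃) :=
        BinaryCubic.cubicNoZeroDivisors_iff_algebraMap
    _ ↔ BinaryCubic.Anisotropic (BinaryCubic.form (algebraMap R K f₀) (algebraMap R K f₁)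
          (algebraMap R K f₂) (algebraMap R K f₃)) :=
        ⟨BinaryCubic.anisotropic_of_cubicNoZeroDivisors,
          BinaryCubic.cubicNoZeroDivisors_of_anisotropic⟩
    _ ↔ _ := BinaryCubic.irreducible_form_iff_anisotropic.symm

open MvPolynomial in
/-- Let `R` be an integral domain with fraction field `K` and let
`f = f₃Y₁³ + f₂Y₁²Y₂ + f₁Y₁Y₂² + f₀Y₂³` be a nonzero binary cubic form over `R`.
Then the associated cubic ring `S_f` is an integral domain (equivalently, its
multiplication `cubicMul` has no zero divisors) if and only if `f` is irreducible
as a homogeneous polynomial in `K[Y₁, Y₂]`. -/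
theorem stmt_8 (R K : Type*) [CommRing R] [IsDomain R] [Field K] [Algebra R K]
    [IsFractionRing R K] (f₀ f₁ f₂ f₃ : R)
    (hf : ¬(f₀ = 0 ∧ f₁ = 0 ∧ f₂ = 0 ∧ f₃ = 0)) :
    (∀ x y : Fin 3 → R, cubicMul f₀ f₁ f₂ f₃ x y = 0 → x = 0 ∨ y = 0) ↔
      Irreducible (C (algebraMap R K f₃) * X 0 ^ 3
        + C (algebraMap R K f₂) * X 0 ^ 2 * X 1
        + C (algebraMap R K f₁) * X 0 * X 1 ^ 2
        + C (algebraMap R K f₀) * X 1 ^ 3 : MvPolynomial (Fin 2) K) :=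
  stmt_8_general R K f₀ f₁ f₂ f₃
end

section
/- Let k be a field and L a finite separable field extension of k(x) of degree 3. Let A₀ be the integral closure of k[x] in L and A_∞ the integral closure of k[x⁻¹] in L. Suppose (1, α₁, α₂) is a k[x]-basis of A₀ such that (1, x^{r₁}α₁, x^{r₂}α₂) is a k[x⁻¹]-basis of A_∞ for integers r₁, r₂, and suppose the basis is normal, i.e. α₁α₂ ∈ k[x]·1. Write the multiplication table α₁α₂ = −g₀, α₁² = −g₁ + f₂α₁ − f₃α₂, α₂² = −g₂ + f₀α₁ − f₁α₂ with f₀, f₁, f₂, f₃, g₀, g₁, g₂ ∈ k[x], and set e₁ = −r₁ − 2, e₂ = −r₂ − 2. Then for each i ∈ {0, 1, 2, 3} the coefficient fᵢ satisfies deg fᵢ ≤ (i−1)e₁ + (2−i)e₂ + 2. -/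
lemma stmt_9_aux_aevalX {k : Type*} [Field k] (r : Polynomial k) :
    Polynomial.aeval (RatFunc.X : RatFunc k) r = algebraMap (Polynomial k) (RatFunc k) r := by
  have := Polynomial.aeval_algHom_apply (IsScalarTower.toAlgHom k (Polynomial k) (RatFunc k))
      Polynomial.X r
  simpa [Polynomial.aeval_X_left_apply, RatFunc.algebraMap_X] using this

lemma stmt_9_aux_deg {k : Type*} [Field k] (m : ℤ) (p q : Polynomial k) (hp : p ≠ 0)
    (h : (RatFunc.X : RatFunc k) ^ m * algebraMap (Polynomial k) (RatFunc k) p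
        = Polynomial.aeval ((RatFunc.X : RatFunc k))⁻¹ q) :
    (p.natDegree : ℤ) ≤ -m := by
  classical
  set K := RatFunc k
  have hX : (RatFunc.X : K) ≠ 0 := RatFunc.X_ne_zero
  set N : ℕ := q.natDegree with hN
  letI : Invertible (RatFunc.X : K) := invertibleOfNonzero hX
  have hrr : Polynomial.reflect N (Polynomial.reflect N q) = q := by
    ext i; simp [Polynomial.coeff_reflect, Polynomial.revAt_invol]
  have hdegr : (Polynomial.reflect N q).natDegree ≤ N := by
    rw [Polynomial.natDegree_le_iff_coeff_eq_zero]
    intro i hi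
    rw [Polynomial.coeff_reflect]
    apply Polynomial.coeff_eq_zero_of_natDegree_lt
    have : Polynomial.revAt N i = i := by
      show ite (i ≤ N) (N - i) i = i
      rw [if_neg (by omega)]
    omega
  have hkey := Polynomial.eval₂_reflect_mul_pow (algebraMap k K) RatFunc.X N
      (Polynomial.reflect N q) hdegr
  rw [hrr, invOf_eq_inv] at hkey
  -- hkey : eval₂ alg X⁻¹ q * X ^ N = eval₂ alg X (reflect N q)
  rw [show Polynomial.eval₂ (algebraMap k K) (RatFunc.X : K)⁻¹ q
        = Polynomial.aeval ((RatFunc.X : K))⁻¹ q from rfl,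
      show Polynomial.eval₂ (algebraMap k K) (RatFunc.X : K) (Polynomial.reflect N q)
        = Polynomial.aeval (RatFunc.X : K) (Polynomial.reflect N q) from rfl,
      stmt_9_aux_aevalX] at hkey
  rw [← h] at hkey
  -- hkey : (X^m * algebraMap p) * X^N = algebraMap (reflect N q)
  have hinj : Function.Injective (algebraMap (Polynomial k) K) :=
    IsFractionRing.injective _ _
  have hXpow : ∀ t : ℕ, ((RatFunc.X : K)) ^ (t : ℤ) = algebraMap (Polynomial k) K (Polynomial.X ^ t) := by
    intro t
    rw [zpow_natCast, map_pow, RatFunc.algebraMap_X]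
  rcases le_or_gt 0 (m + N) with hm | hm
  · -- X^(m+N) * p = reflect N q as polynomials
    have e1 : (RatFunc.X : K) ^ m * algebraMap (Polynomial k) K p * RatFunc.X ^ N
        = algebraMap (Polynomial k) K (Polynomial.X ^ (m + N).toNat * p) := by
      rw [map_mul, ← hXpow, Int.toNat_of_nonneg hm]
      rw [zpow_add₀ hX m (N : ℤ), zpow_natCast]
      ring
    rw [e1] at hkey
    have := hinj hkey
    have h2 : ((m + N).toNat) + p.natDegree ≤ N := by
      have := congrArg Polynomial.natDegree this
      rw [Polynomial.natDegree_mul (pow_ne_zero _ Polynomial.X_ne_zero) hp, Polynomial.natDegree_X_pow] at this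
      omega
    omega
  · -- p = X^s * reflect N q
    have hs : ((-(m + N)).toNat : ℤ) = -(m + N) := Int.toNat_of_nonneg (by omega)
    set s : ℕ := (-(m + N)).toNat
    rw [← zpow_natCast (RatFunc.X : K) N] at hkey
    have hone : (RatFunc.X : K) ^ (s : ℤ) * ((RatFunc.X : K) ^ m * (RatFunc.X : K) ^ (N : ℤ)) = 1 := by
      rw [← zpow_add₀ hX, ← zpow_add₀ hX, show (s : ℤ) + (m + (N : ℤ)) = 0 by omega, zpow_zero]
    have e1 : algebraMap (Polynomial k) K p
        = algebraMap (Polynomial k) K (Polynomial.X ^ s * Polynomial.reflect N q) := by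
      rw [map_mul, ← hXpow, ← hkey]
      linear_combination (-(algebraMap (Polynomial k) K p)) * hone
    have hpe := hinj e1
    have hr0 : Polynomial.reflect N q ≠ 0 := by
      intro h0; rw [h0, mul_zero] at hpe; exact hp hpe
    have := congrArg Polynomial.natDegree hpe
    rw [Polynomial.natDegree_mul (pow_ne_zero _ Polynomial.X_ne_zero) hr0, Polynomial.natDegree_X_pow] at this
    omega

/-- Let `k` be a field and `L` a finite separable extension of `k(x)` of degree `3`,
with `A₀`, `A∞` the integral closures of `k[x]`, resp. `k[x⁻¹]`, in `L` (realized inside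
`L` as the integral closures of the subalgebras generated over `k` by the image of `x`,
resp. of `x⁻¹`).  Suppose `(1, α₁, α₂)` is a `k[x]`-basis of `A₀` such that
`(1, x^r₁·α₁, x^r₂·α₂)` is a `k[x⁻¹]`-basis of `A∞`, and that it is normal with
multiplication table `α₁α₂ = −g₀`, `α₁² = −g₁ + f₂α₁ − f₃α₂`, `α₂² = −g₂ + f₀α₁ − f₁α₂`
(`f₀, f₁, f₂, f₃, g₀, g₁, g₂ ∈ k[x]`).  Setting `e₁ = −r₁ − 2` and `e₂ = −r₂ − 2`, each
coefficient `fᵢ` satisfies `deg fᵢ ≤ (i−1)e₁ + (2−i)e₂ + 2` for `i ∈ {0, 1, 2, 3}`. -/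
theorem stmt_9 (k L : Type*) [Field k] [Field L] [Algebra (RatFunc k) L] [Algebra k L]
    [IsScalarTower k (RatFunc k) L] [Algebra.IsSeparable (RatFunc k) L]
    (hdim : Module.finrank (RatFunc k) L = 3)
    (xL : L) (hxL : xL = algebraMap (RatFunc k) L RatFunc.X)
    (R0 Rinf : Subalgebra k L) (hR0 : R0 = Algebra.adjoin k {xL})
    (hRinf : Rinf = Algebra.adjoin k {xL⁻¹})
    (α₁ α₂ : L) (r₁ r₂ : ℤ)
    (hindep0 : LinearIndependent ↥R0 ![(1 : L), α₁, α₂])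
    (hspan0 : Submodule.span ↥R0 (Set.range ![(1 : L), α₁, α₂]) =
      Subalgebra.toSubmodule (integralClosure ↥R0 L))
    (hindepinf : LinearIndependent ↥Rinf ![(1 : L), xL ^ r₁ * α₁, xL ^ r₂ * α₂])
    (hspaninf : Submodule.span ↥Rinf (Set.range ![(1 : L), xL ^ r₁ * α₁, xL ^ r₂ * α₂]) =
      Subalgebra.toSubmodule (integralClosure ↥Rinf L))
    (φ : Polynomial k → L)
    (hφ : ∀ p, φ p = algebraMap (RatFunc k) L (algebraMap (Polynomial k) (RatFunc k) p))
    (f₀ f₁ f₂ f₃ g₀ g₁ g₂ : Polynomial k)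
    (htable0 : α₁ * α₂ = -φ g₀)
    (htable1 : α₁ * α₁ = -φ g₁ + φ f₂ * α₁ - φ f₃ * α₂)
    (htable2 : α₂ * α₂ = -φ g₂ + φ f₀ * α₁ - φ f₁ * α₂)
    (e₁ e₂ : ℤ) (he₁ : e₁ = -r₁ - 2) (he₂ : e₂ = -r₂ - 2) :
    ∀ i : Fin 4, ![f₀, f₁, f₂, f₃] i = 0 ∨
      ((![f₀, f₁, f₂, f₃] i).natDegree : ℤ) ≤
        ((i : ℤ) - 1) * e₁ + (2 - (i : ℤ)) * e₂ + 2 := by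
  classical
  have hX0 : (RatFunc.X : RatFunc k) ≠ 0 := RatFunc.X_ne_zero
  have hinjL : Function.Injective (algebraMap (RatFunc k) L) := (algebraMap (RatFunc k) L).injective
  have hxL0 : xL ≠ 0 := by
    rw [hxL]; intro h; exact hX0 (hinjL (by rw [h, map_zero]))
  have hφa : ∀ p : Polynomial k, φ p = Polynomial.aeval xL p := by
    intro p
    have h1 := Polynomial.aeval_algHom_apply (IsScalarTower.toAlgHom k (RatFunc k) L) RatFunc.X p
    rw [stmt_9_aux_aevalX] at h1
    simpa [IsScalarTower.coe_toAlgHom', hφ, hxL] using h1.symm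
  have hzpow_mul : ∀ a b : ℤ, xL ^ a * xL ^ b = xL ^ (a + b) :=
    fun a b => (zpow_add₀ hxL0 a b).symm
  have hmem_zpow : ∀ m : ℤ, m ≤ 0 → xL ^ m ∈ Rinf := by
    intro m hm
    have hinv : xL⁻¹ ∈ Rinf := by rw [hRinf]; exact Algebra.subset_adjoin rfl
    have ht : ((-m).toNat : ℤ) = -m := Int.toNat_of_nonneg (by omega)
    have : xL ^ m = (xL⁻¹) ^ (-m).toNat := by
      rw [inv_pow, ← zpow_natCast xL ((-m).toNat), ht, ← zpow_neg, neg_neg]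
    rw [this]; exact pow_mem hinv _
  have hcoef : ∀ (m : ℤ) (p : Polynomial k), m + p.natDegree ≤ 0 → xL ^ m * φ p ∈ Rinf := by
    intro m p hmp
    rw [hφa, Polynomial.aeval_eq_sum_range, Finset.mul_sum]
    apply Subalgebra.sum_mem
    intro i hi
    rw [mul_smul_comm]
    apply Subalgebra.smul_mem
    rw [← zpow_natCast xL i, hzpow_mul]
    apply hmem_zpow
    have := Finset.mem_range.mp hi
    omega
  set v : Fin 3 → L := ![(1 : L), xL ^ r₁ * α₁, xL ^ r₂ * α₂] with hv
  have hv0 : v 0 = 1 := rfl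
  have hv1 : v 1 = xL ^ r₁ * α₁ := rfl
  have hv2 : v 2 = xL ^ r₂ * α₂ := rfl
  have hvmem : ∀ j, v j ∈ integralClosure ↥Rinf L := by
    intro j
    have : v j ∈ Submodule.span ↥Rinf (Set.range v) := Submodule.subset_span ⟨j, rfl⟩
    rwa [hspaninf] at this
  have hsmul : ∀ (s : ↥Rinf) (l : L), s • l = (s : L) * l := fun s l => by
    rw [Algebra.smul_def]; rfl
  have core : ∀ (m₀ m₁ m₂ : ℤ) (p₀ p₁ p₂ : Polynomial k) (z : L),
      z ∈ integralClosure ↥Rinf L →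
      z = xL ^ m₀ * φ p₀ * v 0 + xL ^ m₁ * φ p₁ * v 1 + xL ^ m₂ * φ p₂ * v 2 →
      xL ^ m₁ * φ p₁ ∈ Rinf ∧ xL ^ m₂ * φ p₂ ∈ Rinf := by
    intro m₀ m₁ m₂ p₀ p₁ p₂ z hz hrep
    have hz' : z ∈ Submodule.span ↥Rinf (Set.range v) := by rw [hspaninf]; exact hz
    obtain ⟨c, hc⟩ := (Submodule.mem_span_range_iff_exists_fun _).mp hz'
    set N : ℤ := max 0 (max (m₀ + p₀.natDegree) (max (m₁ + p₁.natDegree) (m₂ + p₂.natDegree)))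
      with hNdef
    have hN0 : (0 : ℤ) ≤ N := le_max_left _ _
    have hb0 : m₀ + (p₀.natDegree : ℤ) ≤ N := le_trans (le_max_left _ _) (le_max_right _ _)
    have hb1 : m₁ + (p₁.natDegree : ℤ) ≤ N :=
      le_trans (le_trans (le_max_left _ _) (le_max_right _ _)) (le_max_right _ _)
    have hb2 : m₂ + (p₂.natDegree : ℤ) ≤ N :=
      le_trans (le_trans (le_max_right _ _) (le_max_right _ _)) (le_max_right _ _)
    have hd0 : xL ^ (m₀ - N) * φ p₀ ∈ Rinf := hcoef _ _ (by omega)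
    have hd1 : xL ^ (m₁ - N) * φ p₁ ∈ Rinf := hcoef _ _ (by omega)
    have hd2 : xL ^ (m₂ - N) * φ p₂ ∈ Rinf := hcoef _ _ (by omega)
    have hw : xL ^ (-N) ∈ Rinf := hmem_zpow _ (by omega)
    set d : Fin 3 → ↥Rinf := ![⟨_, hd0⟩, ⟨_, hd1⟩, ⟨_, hd2⟩] with hd
    have hdc0 : (d 0 : L) = xL ^ (m₀ - N) * φ p₀ := rfl
    have hdc1 : (d 1 : L) = xL ^ (m₁ - N) * φ p₁ := rfl
    have hdc2 : (d 2 : L) = xL ^ (m₂ - N) * φ p₂ := rfl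
    set g : Fin 3 → ↥Rinf := fun j => (⟨xL ^ (-N), hw⟩ : ↥Rinf) * c j - d j with hgdef
    have hsplit : ∀ m : ℤ, xL ^ (m - N) = xL ^ (-N) * xL ^ m := by
      intro m; rw [hzpow_mul, show -N + m = m - N by ring]
    have hc' : (c 0 : L) * v 0 + (c 1 : L) * v 1 + (c 2 : L) * v 2 = z := by
      rw [← hc, Fin.sum_univ_three, hsmul, hsmul, hsmul]
    have hg : ∑ j, g j • v j = 0 := by
      rw [Fin.sum_univ_three, hsmul, hsmul, hsmul]
      simp only [hgdef, AddSubgroupClass.coe_sub, MulMemClass.coe_mul]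
      rw [hdc0, hdc1, hdc2]
      linear_combination (xL ^ (-N)) * hc' + (xL ^ (-N)) * hrep
        - φ p₀ * v 0 * hsplit m₀ - φ p₁ * v 1 * hsplit m₁ - φ p₂ * v 2 * hsplit m₂
    have hgz := Fintype.linearIndependent_iff.mp hindepinf g hg
    have hNinv : xL ^ N * xL ^ (-N) = 1 := by
      rw [hzpow_mul, show N + -N = 0 by ring, zpow_zero]
    constructor
    · have e1 := congrArg (Subtype.val) (hgz 1)
      simp only [hgdef, AddSubgroupClass.coe_sub, MulMemClass.coe_mul, ZeroMemClass.coe_zero] at e1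
      rw [hdc1] at e1
      have : xL ^ m₁ * φ p₁ = (c 1 : L) := by
        linear_combination (-(xL ^ N)) * e1 - φ p₁ * xL ^ N * hsplit m₁
          + ((c 1 : L) - φ p₁ * xL ^ m₁) * hNinv
      rw [this]; exact (c 1).2
    · have e1 := congrArg (Subtype.val) (hgz 2)
      simp only [hgdef, AddSubgroupClass.coe_sub, MulMemClass.coe_mul, ZeroMemClass.coe_zero] at e1
      rw [hdc2] at e1
      have : xL ^ m₂ * φ p₂ = (c 2 : L) := by
        linear_combination (-(xL ^ N)) * e1 - φ p₂ * xL ^ N * hsplit m₂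
          + ((c 2 : L) - φ p₂ * xL ^ m₂) * hNinv
      rw [this]; exact (c 2).2
  have hφneg : ∀ p : Polynomial k, φ (-p) = -φ p := fun p => by
    rw [hφ, hφ, map_neg, map_neg]
  -- expansion of (v 1)^2
  have exp1 : v 1 * v 1 = xL ^ (r₁ + r₁) * φ (-g₁) * v 0 + xL ^ r₁ * φ f₂ * v 1
      + xL ^ (r₁ + r₁ - r₂) * φ (-f₃) * v 2 := by
    rw [hv0, hv1, hv2, hφneg, hφneg]
    have E1 : xL ^ r₁ * xL ^ r₁ = xL ^ (r₁ + r₁) := hzpow_mul _ _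
    have E2 : xL ^ (r₁ + r₁ - r₂) * xL ^ r₂ = xL ^ (r₁ + r₁) := by
      rw [hzpow_mul, show r₁ + r₁ - r₂ + r₂ = r₁ + r₁ by ring]
    linear_combination (xL ^ (r₁ + r₁)) * htable1 + (α₁ * α₁ - φ f₂ * α₁) * E1
      + (φ f₃ * α₂) * E2
  have exp2 : v 2 * v 2 = xL ^ (r₂ + r₂) * φ (-g₂) * v 0 + xL ^ (r₂ + r₂ - r₁) * φ f₀ * v 1
      + xL ^ r₂ * φ (-f₁) * v 2 := by
    rw [hv0, hv1, hv2, hφneg, hφneg]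
    have E1 : xL ^ r₂ * xL ^ r₂ = xL ^ (r₂ + r₂) := hzpow_mul _ _
    have E2 : xL ^ (r₂ + r₂ - r₁) * xL ^ r₁ = xL ^ (r₂ + r₂) := by
      rw [hzpow_mul, show r₂ + r₂ - r₁ + r₁ = r₂ + r₂ by ring]
    linear_combination (xL ^ (r₂ + r₂)) * htable2 + (α₂ * α₂ + φ f₁ * α₂) * E1
      - (φ f₀ * α₁) * E2
  obtain ⟨hm2, hm3⟩ := core (r₁ + r₁) r₁ (r₁ + r₁ - r₂) (-g₁) f₂ (-f₃) (v 1 * v 1)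
    (mul_mem (hvmem 1) (hvmem 1)) exp1
  obtain ⟨hm0, hm1⟩ := core (r₂ + r₂) (r₂ + r₂ - r₁) r₂ (-g₂) f₀ (-f₁) (v 2 * v 2)
    (mul_mem (hvmem 2) (hvmem 2)) exp2
  -- degree bound extraction
  have hdeg : ∀ (m : ℤ) (p : Polynomial k), xL ^ m * φ p ∈ Rinf → p ≠ 0 →
      (p.natDegree : ℤ) ≤ -m := by
    intro m p hmem hp
    rw [hRinf, Algebra.adjoin_singleton_eq_range_aeval] at hmem
    obtain ⟨q, hq⟩ := hmem
    -- hq : aeval xL⁻¹ q = xL^m * φ p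
    apply stmt_9_aux_deg m p q hp
    apply hinjL
    have h1 := Polynomial.aeval_algHom_apply (IsScalarTower.toAlgHom k (RatFunc k) L)
      ((RatFunc.X : RatFunc k))⁻¹ q
    rw [map_mul, map_zpow₀]
    rw [IsScalarTower.coe_toAlgHom'] at h1
    rw [map_inv₀] at h1
    rw [← hxL] at h1
    rw [← hφ p, ← hxL]
    rw [← hq, ← h1]
    rfl
  intro i
  fin_cases i
  · rcases eq_or_ne f₀ 0 with h | h
    · exact Or.inl h
    · refine Or.inr ?_
      have hb := hdeg _ _ hm0 h
      show (f₀.natDegree : ℤ) ≤ ((0 : ℤ) - 1) * e₁ + (2 - (0 : ℤ)) * e₂ + 2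
      omega
  · rcases eq_or_ne f₁ 0 with h | h
    · exact Or.inl h
    · refine Or.inr ?_
      have hb := hdeg _ _ hm1 (neg_ne_zero.mpr h)
      rw [Polynomial.natDegree_neg] at hb
      show (f₁.natDegree : ℤ) ≤ ((1 : ℤ) - 1) * e₁ + (2 - (1 : ℤ)) * e₂ + 2
      omega
  · rcases eq_or_ne f₂ 0 with h | h
    · exact Or.inl h
    · refine Or.inr ?_
      have hb := hdeg _ _ hm2 h
      show (f₂.natDegree : ℤ) ≤ ((2 : ℤ) - 1) * e₁ + (2 - (2 : ℤ)) * e₂ + 2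
      omega
  · rcases eq_or_ne f₃ 0 with h | h
    · exact Or.inl h
    · refine Or.inr ?_
      have hb := hdeg _ _ hm3 (neg_ne_zero.mpr h)
      rw [Polynomial.natDegree_neg] at hb
      show (f₃.natDegree : ℤ) ≤ ((3 : ℤ) - 1) * e₁ + (2 - (3 : ℤ)) * e₂ + 2
      omega
end

section
/- Let k be a field and L a finite separable field extension of k(x) of degree 3, with A₀ the integral closure of k[x] in L. Suppose (1, α₁, α₂) is a normal basis of A₀ over k[x] (so α₁α₂ ∈ k[x]·1), with multiplication table α₁² = −g₁ + f₂α₁ − f₃α₂ and α₂² = −g₂ + f₀α₁ − f₁α₂ for f₀, f₁, f₂, f₃ ∈ k[x]. Then the cubic polynomial f₃y³ + f₂y² + f₁y + f₀ ∈ k(x)[y] is irreducible over k(x), there is a k(x)-algebra isomorphism L ≅ k(x)[y]/(f₃y³ + f₂y² + f₁y + f₀) under which the k[x]-module A₀ corresponds to k[x]·1 + k[x]·(f₃y) + k[x]·(f₃y² + f₂y + f₁); in particular (1, f₃y, f₃y² + f₂y + f₁) is an integral basis of k(x)[y]/(f₃y³ + f₂y² + f₁y + f₀) over k[x]. -/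
/-!
Associativity, `(α₁α₁)α₂ = α₁(α₁α₂)`, read off in the basis `(1, α₁, α₂)`, forces
`g₀ = f₃f₀` and `g₁ = f₁f₃`, and then `α₁α₂ = -f₃f₀` forces `f₃ ≠ 0`. For `τ = -α₁/f₃` the
table gives `f₃τ² + f₂τ + f₁ = -α₂`, and multiplying by `τ` gives `P(τ) = 0`. So `y ↦ τ`
defines a `k(x)`-algebra map `k(x)[y]/(P) → L` whose image contains `1, α₁, α₂`, which span
`L`; both sides have dimension 3, so it is bijective, the quotient is a field and `P` is
irreducible. The map sends `f₃y ↦ -α₁` and `f₃y² + f₂y + f₁ ↦ -α₂`, so it matches the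
`k[x]`-span of `1, f₃y, f₃y² + f₂y + f₁` with that of `1, α₁, α₂`, which is `A₀`.
-/

open Polynomial

theorem LinearIndependent.eq_of_triple {R M : Type*} [Semiring R] [AddCommMonoid M] [Module R M]
    {x y z : M} (h : LinearIndependent R ![x, y, z]) {a b c a' b' c' : R}
    (habc : a • x + b • y + c • z = a' • x + b' • y + c' • z) : a = a' ∧ b = b' ∧ c = c' := by
  have := Fintype.linearIndependent_iffₛ.mp h ![a, b, c] ![a', b', c']
    (by simpa [Fin.sum_univ_three, add_assoc] using habc)
  exact ⟨this 0, this 1, this 2⟩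

theorem LinearIndependent.of_subalgebra_of_coe_eq_range {R A L ι : Type*} [CommRing R]
    [CommRing A] [CommRing L] [Algebra R L] [Algebra A L] {S : Subalgebra R L}
    (hS : (S : Set L) = Set.range (algebraMap A L)) (hinj : Function.Injective (algebraMap A L))
    {v : ι → L} (hv : LinearIndependent S v) : LinearIndependent A v :=
  hv.map_of_injective_injective
    (fun a => ⟨algebraMap A L a, show _ ∈ (S : Set L) from hS ▸ Set.mem_range_self a⟩)
    (AddMonoidHom.id L)
    (fun a ha => hinj <| by simpa using congrArg Subtype.val ha) (fun _ => id)
    (fun a m => by simp [Algebra.smul_def])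

theorem Submodule.mem_span_range_three_iff {R M : Type*} [Semiring R] [AddCommMonoid M]
    [Module R M] {x y z v : M} :
    v ∈ Submodule.span R (Set.range ![x, y, z]) ↔ ∃ a b c : R, a • x + b • y + c • z = v := by
  rw [Submodule.mem_span_range_iff_exists_fun]
  simp [Fin.exists_fin_succ_pi, Fin.sum_univ_succ, add_assoc]

theorem Submodule.coe_span_subalgebra_of_coe_eq_range {R A L ι : Type*} [CommRing R]
    [CommRing A] [CommRing L] [Algebra R L] [Algebra A L] [Fintype ι] {S : Subalgebra R L}
    (hS : (S : Set L) = Set.range (algebraMap A L)) (v : ι → L) :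
    (Submodule.span S (Set.range v) : Set L) = Submodule.span A (Set.range v) := by
  ext z
  simp only [SetLike.mem_coe, Submodule.mem_span_range_iff_exists_fun]
  constructor
  · rintro ⟨c, rfl⟩
    choose d hd using fun i => (Set.ext_iff.mp hS (c i)).mp (c i).2
    exact ⟨d, by simp [Algebra.smul_def, hd]⟩
  · rintro ⟨d, rfl⟩
    refine ⟨fun i => ⟨algebraMap A L (d i), show _ ∈ (S : Set L) from hS ▸ ⟨d i, rfl⟩⟩, ?_⟩
    simp [Algebra.smul_def]

theorem Algebra.coe_adjoin_algebraMap_X {R L : Type*} [CommRing R] [CommRing L] [Algebra R L]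
    [Algebra R[X] L] [IsScalarTower R R[X] L] :
    (Algebra.adjoin R {algebraMap R[X] L X} : Set L) = Set.range (algebraMap R[X] L) := by
  rw [Algebra.adjoin_singleton_eq_range_aeval]
  ext z
  simp [aeval_algebraMap_apply]

theorem LinearMap.surjective_of_linearIndependent_mem_range {K V W ι : Type*} [DivisionRing K]
    [AddCommGroup V] [Module K V] [AddCommGroup W] [Module K W] [Fintype ι] [Nonempty ι]
    (f : V →ₗ[K] W) {v : ι → W} (hv : LinearIndependent K v)
    (hcard : Fintype.card ι = Module.finrank K W) (hmem : ∀ i, v i ∈ LinearMap.range f) :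
    Function.Surjective f := by
  have hspan : Submodule.span K (Set.range v) ≤ LinearMap.range f :=
    Submodule.span_le.mpr (Set.range_subset_iff.mpr hmem)
  rw [hv.span_eq_top_of_card_eq_finrank hcard, top_le_iff] at hspan
  exact LinearMap.range_eq_top.mp hspan

theorem AdjoinRoot.irreducible_of_injective {R S : Type*} [CommRing R] [IsDomain R] [CommRing S]
    [IsDomain S] {P : R[X]} (hP : P ≠ 0) {f : AdjoinRoot P →+* S} (hf : Function.Injective f) :
    Irreducible P := by
  have : IsDomain (AdjoinRoot P) := hf.isDomain f
  have := (Ideal.Quotient.isDomain_iff_prime _).mp this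
  exact ((Ideal.span_singleton_prime hP).mp this).irreducible

section MulTable

variable {L : Type*} [Field L] {α₁ α₂ c₀ c₁ c₂ c₃ τ : L}

theorem quadratic_eq_neg_of_mul_table (hc₃ : c₃ ≠ 0) (hτ : c₃ * τ = -α₁)
    (h₁ : α₁ * α₁ = -(c₁ * c₃) + c₂ * α₁ - c₃ * α₂) :
    c₃ * τ ^ 2 + c₂ * τ + c₁ = -α₂ :=
  mul_left_cancel₀ hc₃ <| by linear_combination h₁ + (c₃ * τ - α₁ + c₂) * hτ

theorem cubic_eq_zero_of_mul_table (hc₃ : c₃ ≠ 0) (hτ : c₃ * τ = -α₁)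
    (h₀ : α₁ * α₂ = -(c₃ * c₀)) (h₁ : α₁ * α₁ = -(c₁ * c₃) + c₂ * α₁ - c₃ * α₂) :
    c₃ * τ ^ 3 + c₂ * τ ^ 2 + c₁ * τ + c₀ = 0 := by
  have hα₂ := quadratic_eq_neg_of_mul_table hc₃ hτ h₁
  refine mul_left_cancel₀ hc₃ ?_
  linear_combination c₃ * τ * hα₂ - α₂ * hτ + h₀

end MulTable

theorem exists_algEquiv_adjoinRoot_of_mul_table {K L : Type*} [Field K] [Field L] [Algebra K L]
    (hdim : Module.finrank K L = 3) {α₁ α₂ : L} (hv : LinearIndependent K ![1, α₁, α₂])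
    {c₀ c₁ c₂ c₃ : K} (hc₃ : c₃ ≠ 0) (h₀ : α₁ * α₂ = -algebraMap K L (c₃ * c₀))
    (h₁ : α₁ * α₁ = -algebraMap K L (c₁ * c₃) + algebraMap K L c₂ * α₁ - algebraMap K L c₃ * α₂) :
    Irreducible (C c₃ * X ^ 3 + C c₂ * X ^ 2 + C c₁ * X + C c₀) ∧
      ∃ e : AdjoinRoot (C c₃ * X ^ 3 + C c₂ * X ^ 2 + C c₁ * X + C c₀) ≃ₐ[K] L,
        e (AdjoinRoot.mk _ (C c₃ * X)) = -α₁ ∧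
        e (AdjoinRoot.mk _ (C c₃ * X ^ 2 + C c₂ * X + C c₁)) = -α₂ := by
  set P := C c₃ * X ^ 3 + C c₂ * X ^ 2 + C c₁ * X + C c₀
  have hPdeg : P.natDegree = 3 := by simp only [P]; compute_degree!
  have hP : P ≠ 0 := ne_zero_of_natDegree_gt (n := 0) (by omega)
  have hc₃L : algebraMap K L c₃ ≠ 0 := (_root_.map_ne_zero _).mpr hc₃
  set τ := -(α₁ / algebraMap K L c₃)
  have hτ : algebraMap K L c₃ * τ = -α₁ := by rw [mul_neg, mul_div_cancel₀ _ hc₃L]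
  rw [map_mul] at h₀ h₁
  have hroot : aeval τ P = 0 := by
    simpa [P] using cubic_eq_zero_of_mul_table hc₃L hτ h₀ h₁
  let f := AdjoinRoot.liftAlgHom P (Algebra.ofId K L) τ hroot
  have hf : ∀ g, f (AdjoinRoot.mk P g) = aeval τ g := fun _ => rfl
  have hu : f (AdjoinRoot.mk P (C c₃ * X)) = -α₁ := by rw [hf]; simpa using hτ
  have hw : f (AdjoinRoot.mk P (C c₃ * X ^ 2 + C c₂ * X + C c₁)) = -α₂ := by
    rw [hf]; simpa using quadratic_eq_neg_of_mul_table hc₃L hτ h₁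
  have hsurj : Function.Surjective f := by
    refine f.toLinearMap.surjective_of_linearIndependent_mem_range hv (by simp [hdim]) ?_
    intro i
    fin_cases i
    · exact ⟨1, map_one f⟩
    · exact ⟨-AdjoinRoot.mk P (C c₃ * X), by
        simp only [AlgHom.toLinearMap_apply, map_neg, hu, neg_neg]; rfl⟩
    · exact ⟨-AdjoinRoot.mk P (C c₃ * X ^ 2 + C c₂ * X + C c₁), by
        simp only [AlgHom.toLinearMap_apply, map_neg, hw, neg_neg]; rfl⟩
  have : FiniteDimensional K L := .of_finrank_eq_succ hdim
  have : FiniteDimensional K (AdjoinRoot P) := (AdjoinRoot.powerBasis hP).finite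
  have hfinrank : Module.finrank K (AdjoinRoot P) = Module.finrank K L := by
    rw [(AdjoinRoot.powerBasis hP).finrank, AdjoinRoot.powerBasis_dim, hPdeg, hdim]
  have hinj : Function.Injective f :=
    (LinearMap.injective_iff_surjective_of_finrank_eq_finrank (f := f.toLinearMap) hfinrank).mpr
      hsurj
  exact ⟨AdjoinRoot.irreducible_of_injective hP (f := f.toRingHom) hinj,
    AlgEquiv.ofBijective f ⟨hinj, hsurj⟩, hu, hw⟩

section LinearIndependentMulTable

variable {A L : Type*} [CommRing A] [CommRing L] [Algebra A L] {α₁ α₂ : L}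
  {f₀ f₁ f₂ f₃ g₀ g₁ g₂ : A}

theorem LinearIndependent.coeff_eq_of_mul_table (hv : LinearIndependent A ![1, α₁, α₂])
    (h₀ : α₁ * α₂ = -algebraMap A L g₀)
    (h₁ : α₁ * α₁ = -algebraMap A L g₁ + algebraMap A L f₂ * α₁ - algebraMap A L f₃ * α₂)
    (h₂ : α₂ * α₂ = -algebraMap A L g₂ + algebraMap A L f₀ * α₁ - algebraMap A L f₁ * α₂) :
    g₀ = f₃ * f₀ ∧ g₁ = f₁ * f₃ := by
  -- `(α₁ * α₁) * α₂ = α₁ * (α₁ * α₂)`, both sides expanded with the table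
  have hassoc : (f₃ * g₂) • (1 : L) + g₀ • α₁ + (f₁ * f₃) • α₂ =
      (f₂ * g₀) • (1 : L) + (f₃ * f₀) • α₁ + g₁ • α₂ := by
    simp only [Algebra.smul_def, map_mul, mul_one]
    linear_combination (-α₂) * h₁ + algebraMap A L f₃ * h₂ + (α₁ - algebraMap A L f₂) * h₀
  obtain ⟨-, hg₀, hg₁⟩ := hv.eq_of_triple hassoc
  exact ⟨hg₀, hg₁.symm⟩

theorem LinearIndependent.ne_zero_of_mul_table [Nontrivial A] [NoZeroDivisors L]
    (hv : LinearIndependent A ![1, α₁, α₂]) (h₀ : α₁ * α₂ = -algebraMap A L (f₃ * f₀)) :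
    f₃ ≠ 0 := by
  rintro rfl
  rw [zero_mul, map_zero, neg_zero] at h₀
  rcases mul_eq_zero.mp h₀ with h | h
  · exact hv.ne_zero 1 h
  · exact hv.ne_zero 2 h

end LinearIndependentMulTable

section AlgEquivSpan

variable {A B L : Type*} [CommRing A] [CommRing B] [CommRing L] [Algebra A B] [Algebra A L]
  (e : B ≃ₐ[A] L) {u w : B} {α₁ α₂ : L}

theorem AlgEquiv.apply_algebraMap_add_mul (heu : e u = -α₁) (hew : e w = -α₂) (p q r : A) :
    e (algebraMap A B p + algebraMap A B q * u + algebraMap A B r * w) =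
      p • 1 + (-q) • α₁ + (-r) • α₂ := by
  simp only [map_add, map_mul, AlgEquiv.commutes, heu, hew, Algebra.smul_def, map_neg]
  ring

theorem AlgEquiv.symm_image_span_range_three (heu : e u = -α₁) (hew : e w = -α₂) :
    e.symm '' (Submodule.span A (Set.range ![1, α₁, α₂]) : Set L) =
      {z | ∃ p q r : A, z = algebraMap A B p + algebraMap A B q * u + algebraMap A B r * w} := by
  ext z
  simp only [Set.mem_image, SetLike.mem_coe, Submodule.mem_span_range_three_iff,
    Set.mem_ofPred_eq]
  constructor
  · rintro ⟨y, ⟨p, q, r, rfl⟩, rfl⟩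
    refine ⟨p, -q, -r, e.injective ?_⟩
    rw [e.apply_algebraMap_add_mul heu hew, e.apply_symm_apply, neg_neg, neg_neg]
  · rintro ⟨p, q, r, rfl⟩
    exact ⟨_, ⟨p, -q, -r, (e.apply_algebraMap_add_mul heu hew p q r).symm⟩, e.symm_apply_apply _⟩

theorem AlgEquiv.eq_of_algebraMap_add_mul_eq (hv : LinearIndependent A ![1, α₁, α₂])
    (heu : e u = -α₁) (hew : e w = -α₂) {p q r p' q' r' : A}
    (h : algebraMap A B p + algebraMap A B q * u + algebraMap A B r * w =
      algebraMap A B p' + algebraMap A B q' * u + algebraMap A B r' * w) :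
    p = p' ∧ q = q' ∧ r = r' := by
  have := congrArg e h
  rw [e.apply_algebraMap_add_mul heu hew, e.apply_algebraMap_add_mul heu hew] at this
  obtain ⟨hp, hq, hr⟩ := hv.eq_of_triple this
  exact ⟨hp, neg_inj.mp hq, neg_inj.mp hr⟩

end AlgEquivSpan

theorem exists_algEquiv_adjoinRoot_of_linearIndependent {A K L : Type*} [CommRing A]
    [IsDomain A] [Field K] [Algebra A K] [IsFractionRing A K] [Field L] [Algebra K L]
    [Algebra A L] [IsScalarTower A K L] (hdim : Module.finrank K L = 3) {α₁ α₂ : L}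
    (hv : LinearIndependent A ![1, α₁, α₂]) {f₀ f₁ f₂ f₃ g₀ g₁ g₂ : A}
    (h₀ : α₁ * α₂ = -algebraMap A L g₀)
    (h₁ : α₁ * α₁ = -algebraMap A L g₁ + algebraMap A L f₂ * α₁ - algebraMap A L f₃ * α₂)
    (h₂ : α₂ * α₂ = -algebraMap A L g₂ + algebraMap A L f₀ * α₁ - algebraMap A L f₁ * α₂)
    {P : K[X]} (hP : P = C (algebraMap A K f₃) * X ^ 3 + C (algebraMap A K f₂) * X ^ 2 +
      C (algebraMap A K f₁) * X + C (algebraMap A K f₀))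
    {u w : AdjoinRoot P} (hu : u = AdjoinRoot.mk P (C (algebraMap A K f₃) * X))
    (hw : w = AdjoinRoot.mk P
      (C (algebraMap A K f₃) * X ^ 2 + C (algebraMap A K f₂) * X + C (algebraMap A K f₁))) :
    Irreducible P ∧ ∃ e : L ≃ₐ[K] AdjoinRoot P,
      e '' (Submodule.span A (Set.range ![1, α₁, α₂]) : Set L) =
        {z | ∃ p q r : A, z = algebraMap A _ p + algebraMap A _ q * u + algebraMap A _ r * w} ∧
      ∀ p q r p' q' r' : A,
        algebraMap A _ p + algebraMap A _ q * u + algebraMap A _ r * w =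
          algebraMap A _ p' + algebraMap A _ q' * u + algebraMap A _ r' * w →
        p = p' ∧ q = q' ∧ r = r' := by
  obtain ⟨rfl, rfl⟩ := hv.coeff_eq_of_mul_table h₀ h₁ h₂
  have hf₃ := hv.ne_zero_of_mul_table h₀
  simp only [IsScalarTower.algebraMap_apply A K L, map_mul] at h₀ h₁
  subst hP
  obtain ⟨hirr, e, heu, hew⟩ := exists_algEquiv_adjoinRoot_of_mul_table hdim
    ((LinearIndependent.iff_fractionRing A K).mp hv)
    ((_root_.map_ne_zero_iff _ (IsFractionRing.injective A K)).mpr hf₃)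
    (c₁ := algebraMap A K f₁) (c₂ := algebraMap A K f₂)
    (by rwa [map_mul]) (by rwa [map_mul])
  rw [← hu] at heu
  rw [← hw] at hew
  exact ⟨hirr, e.symm, (e.restrictScalars A).symm_image_span_range_three heu hew,
    fun _ _ _ _ _ _ => (e.restrictScalars A).eq_of_algebraMap_add_mul_eq hv heu hew⟩

open Polynomial in
theorem stmt_10_general (k L : Type*) [Field k] [Field L] [Algebra (RatFunc k) L] [Algebra k L]
    [IsScalarTower k (RatFunc k) L]
    (hdim : Module.finrank (RatFunc k) L = 3)
    (xL : L) (hxL : xL = algebraMap (RatFunc k) L RatFunc.X)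
    (R0 : Subalgebra k L) (hR0 : R0 = Algebra.adjoin k {xL})
    (α₁ α₂ : L)
    (hindep0 : LinearIndependent ↥R0 ![(1 : L), α₁, α₂])
    (hspan0 : Submodule.span ↥R0 (Set.range ![(1 : L), α₁, α₂]) =
      Subalgebra.toSubmodule (integralClosure ↥R0 L))
    (φ : Polynomial k → L)
    (hφ : ∀ p, φ p = algebraMap (RatFunc k) L (algebraMap (Polynomial k) (RatFunc k) p))
    (f₀ f₁ f₂ f₃ g₀ g₁ g₂ : Polynomial k)
    (htable0 : α₁ * α₂ = -φ g₀)
    (htable1 : α₁ * α₁ = -φ g₁ + φ f₂ * α₁ - φ f₃ * α₂)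
    (htable2 : α₂ * α₂ = -φ g₂ + φ f₀ * α₁ - φ f₁ * α₂)
    (ψ : Polynomial k → Polynomial (RatFunc k))
    (hψ : ∀ p, ψ p = C (algebraMap (Polynomial k) (RatFunc k) p))
    (P : Polynomial (RatFunc k))
    (hP : P = ψ f₃ * X ^ 3 + ψ f₂ * X ^ 2 + ψ f₁ * X + ψ f₀)
    (u w : Polynomial (RatFunc k) ⧸ Ideal.span {P})
    (hu : u = Ideal.Quotient.mk (Ideal.span {P}) (ψ f₃ * X))
    (hw : w = Ideal.Quotient.mk (Ideal.span {P}) (ψ f₃ * X ^ 2 + ψ f₂ * X + ψ f₁))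
    (χ : Polynomial k → Polynomial (RatFunc k) ⧸ Ideal.span {P})
    (hχ : ∀ p, χ p = Ideal.Quotient.mk (Ideal.span {P}) (ψ p)) :
    Irreducible P ∧
    ∃ e : L ≃ₐ[RatFunc k] (Polynomial (RatFunc k) ⧸ Ideal.span {P}),
      (⇑e '' (integralClosure ↥R0 L : Set L) =
        {z | ∃ p q r : Polynomial k, z = χ p + χ q * u + χ r * w}) ∧
      (∀ p q r p' q' r' : Polynomial k,
        χ p + χ q * u + χ r * w = χ p' + χ q' * u + χ r' * w →
          p = p' ∧ q = q' ∧ r = r') := by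
  let : Algebra k[X] L := ((algebraMap (RatFunc k) L).comp (algebraMap k[X] (RatFunc k))).toAlgebra
  have : IsScalarTower k[X] (RatFunc k) L := .of_algebraMap_eq fun _ => rfl
  have : IsScalarTower k k[X] L := .of_algebraMap_eq fun a => by
    rw [IsScalarTower.algebraMap_apply k (RatFunc k) L, IsScalarTower.algebraMap_apply k k[X]]; rfl
  have hR0' : (R0 : Set L) = Set.range (algebraMap k[X] L) := by
    rw [hR0, hxL, ← RatFunc.algebraMap_X]
    exact Algebra.coe_adjoin_algebraMap_X
  have hv : LinearIndependent k[X] ![1, α₁, α₂] := hindep0.of_subalgebra_of_coe_eq_range hR0'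
    ((algebraMap (RatFunc k) L).injective.comp (IsFractionRing.injective k[X] (RatFunc k)))
  have hIC : (integralClosure R0 L : Set L) = Submodule.span k[X] (Set.range ![1, α₁, α₂]) := by
    rw [← Subalgebra.coe_toSubmodule, ← hspan0, Submodule.coe_span_subalgebra_of_coe_eq_range hR0']
  obtain rfl : φ = algebraMap k[X] L := funext hφ
  simp only [hψ] at hP hu hw hχ
  obtain ⟨hirr, e, himage, huniq⟩ := exists_algEquiv_adjoinRoot_of_linearIndependent hdim hv
    htable0 htable1 htable2 hP hu hw
  simp only [hχ]
  exact ⟨hirr, e, hIC ▸ himage, huniq⟩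

open Polynomial in
/-- Let `k` be a field and `L` a degree-`3` separable extension of `k(x)`, with `A₀` the
integral closure of `k[x]` in `L` (realized as the integral closure of the subalgebra
generated over `k` by the image `xL` of `x`).  Suppose `(1, α₁, α₂)` is a normal
`k[x]`-basis of `A₀` with multiplication table `α₁α₂ = −g₀`, `α₁² = −g₁ + f₂α₁ − f₃α₂`,
`α₂² = −g₂ + f₀α₁ − f₁α₂`.  Then the cubic `f₃y³ + f₂y² + f₁y + f₀ ∈ k(x)[y]` is
irreducible over `k(x)`, and there is a `k(x)`-algebra isomorphism
`L ≅ k(x)[y]/(f₃y³ + f₂y² + f₁y + f₀)` under which `A₀` corresponds to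
`k[x]·1 + k[x]·(f₃y) + k[x]·(f₃y² + f₂y + f₁)`; in particular
`(1, f₃y, f₃y² + f₂y + f₁)` is an integral basis over `k[x]` (the uniqueness-of-
representation clause expresses its `k[x]`-linear independence). -/
theorem stmt_10 (k L : Type*) [Field k] [Field L] [Algebra (RatFunc k) L] [Algebra k L]
    [IsScalarTower k (RatFunc k) L] [Algebra.IsSeparable (RatFunc k) L]
    (hdim : Module.finrank (RatFunc k) L = 3)
    (xL : L) (hxL : xL = algebraMap (RatFunc k) L RatFunc.X)
    (R0 : Subalgebra k L) (hR0 : R0 = Algebra.adjoin k {xL})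
    (α₁ α₂ : L)
    (hindep0 : LinearIndependent ↥R0 ![(1 : L), α₁, α₂])
    (hspan0 : Submodule.span ↥R0 (Set.range ![(1 : L), α₁, α₂]) =
      Subalgebra.toSubmodule (integralClosure ↥R0 L))
    (φ : Polynomial k → L)
    (hφ : ∀ p, φ p = algebraMap (RatFunc k) L (algebraMap (Polynomial k) (RatFunc k) p))
    (f₀ f₁ f₂ f₃ g₀ g₁ g₂ : Polynomial k)
    (htable0 : α₁ * α₂ = -φ g₀)
    (htable1 : α₁ * α₁ = -φ g₁ + φ f₂ * α₁ - φ f₃ * α₂)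
    (htable2 : α₂ * α₂ = -φ g₂ + φ f₀ * α₁ - φ f₁ * α₂)
    (ψ : Polynomial k → Polynomial (RatFunc k))
    (hψ : ∀ p, ψ p = C (algebraMap (Polynomial k) (RatFunc k) p))
    (P : Polynomial (RatFunc k))
    (hP : P = ψ f₃ * X ^ 3 + ψ f₂ * X ^ 2 + ψ f₁ * X + ψ f₀)
    (u w : Polynomial (RatFunc k) ⧸ Ideal.span {P})
    (hu : u = Ideal.Quotient.mk (Ideal.span {P}) (ψ f₃ * X))
    (hw : w = Ideal.Quotient.mk (Ideal.span {P}) (ψ f₃ * X ^ 2 + ψ f₂ * X + ψ f₁))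
    (χ : Polynomial k → Polynomial (RatFunc k) ⧸ Ideal.span {P})
    (hχ : ∀ p, χ p = Ideal.Quotient.mk (Ideal.span {P}) (ψ p)) :
    Irreducible P ∧
    ∃ e : L ≃ₐ[RatFunc k] (Polynomial (RatFunc k) ⧸ Ideal.span {P}),
      (⇑e '' (integralClosure ↥R0 L : Set L) =
        {z | ∃ p q r : Polynomial k, z = χ p + χ q * u + χ r * w}) ∧
      (∀ p q r p' q' r' : Polynomial k,
        χ p + χ q * u + χ r * w = χ p' + χ q' * u + χ r' * w →
          p = p' ∧ q = q' ∧ r = r') :=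
  stmt_10_general k L hdim xL hxL R0 hR0 α₁ α₂ hindep0 hspan0 φ hφ f₀ f₁ f₂ f₃ g₀ g₁ g₂ htable0
    htable1 htable2 ψ hψ P hP u w hu hw χ hχ
end

section
/- In the polynomial ring ℤ[x₁, x₂, x₃, x₄, x₅] with the symmetric group S₅ acting by permuting the variables, consider δ = x₁x₂ + x₂x₃ + x₃x₄ + x₄x₅ + x₅x₁ − x₁x₃ − x₃x₅ − x₅x₂ − x₂x₄ − x₄x₁. Then the 5-cycle (1 2 3 4 5) fixes δ, the 4-cycle (1 2 4 3) sends δ to −δ, and consequently the square δ² is fixed by every element of the subgroup of S₅ generated by (1 2 3 4 5) and (1 2 4 3) (a subgroup of order 20). -/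
/-!
δ is invariant under the 5-cycle and anti-invariant under the 4-cycle, so δ² is fixed by both
generators; stabilisers are subgroups, hence δ² is fixed by the whole closure. That closure is
the Frobenius group of order 20: its elements are the products `c₅ⁱ c₄ʲ` (`i < 5`, `j < 4`),
and these twenty permutations are closed under multiplication, which in a finite group already
makes them a subgroup.
-/

open MvPolynomial Equiv

theorem Subgroup.coe_closure_eq_of_mul_mem {G : Type*} [Group G] [Finite G] {S s : Set G}
    (hSs : S ⊆ s) (hs : s ⊆ Subgroup.closure S) (one_mem : 1 ∈ s)
    (mul_mem : ∀ a ∈ s, ∀ b ∈ s, a * b ∈ s) : (Subgroup.closure S : Set G) = s := by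
  refine subset_antisymm ?_ hs
  rw [← Subgroup.coe_toSubmonoid, Subgroup.closure_toSubmonoid_of_finite]
  exact (Submonoid.closure_le (S := ⟨⟨s, fun ha hb => mul_mem _ ha _ hb⟩, one_mem⟩)).2 hSs

section renameStabilizer

variable {σ R : Type*} [CommSemiring R]

theorem rename_perm_mul (g h : Perm σ) (p : MvPolynomial σ R) :
    rename ⇑(g * h) p = rename g (rename h p) :=
  (rename_rename h g p).symm

def renameStabilizer (p : MvPolynomial σ R) : Subgroup (Perm σ) where
  carrier := {g | rename g p = p}
  one_mem' := by simp
  mul_mem' {g h} (hg : rename g p = p) (hh : rename h p = p) := by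
    show rename _ p = p
    rw [rename_perm_mul, hh, hg]
  inv_mem' {g} (hg : rename g p = p) := by
    show rename _ p = p
    conv_lhs => rw [← hg, ← rename_perm_mul, inv_mul_cancel, Perm.coe_one, rename_id,
      AlgHom.id_apply]

theorem mem_renameStabilizer {p : MvPolynomial σ R} {g : Perm σ} :
    g ∈ renameStabilizer p ↔ rename g p = p :=
  Iff.rfl

end renameStabilizer

section cayleyDelta

variable (R : Type*) [CommRing R]

noncomputable def cayleyDelta : MvPolynomial (Fin 5) R :=
  X 0 * X 1 + X 1 * X 2 + X 2 * X 3 + X 3 * X 4 + X 4 * X 0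
    - X 0 * X 2 - X 2 * X 4 - X 4 * X 1 - X 1 * X 3 - X 3 * X 0

theorem rename_fiveCycle_cayleyDelta :
    rename ⇑c[0, 1, 2, 3, 4] (cayleyDelta R) = cayleyDelta R := by
  have : ⇑(c[0, 1, 2, 3, 4] : Perm (Fin 5)) = ![1, 2, 3, 4, 0] := by decide
  rw [this]
  simp only [cayleyDelta, map_sub, map_add, map_mul, rename_X, Matrix.cons_val_zero,
    Matrix.cons_val_one, Matrix.cons_val]
  ring

theorem rename_fourCycle_cayleyDelta :
    rename ⇑c[0, 1, 3, 2] (cayleyDelta R) = -cayleyDelta R := by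
  have : ⇑(c[0, 1, 3, 2] : Perm (Fin 5)) = ![1, 3, 0, 2, 4] := by decide
  rw [this]
  simp only [cayleyDelta, map_sub, map_add, map_mul, rename_X, Matrix.cons_val_zero,
    Matrix.cons_val_one, Matrix.cons_val]
  ring

end cayleyDelta

def frobeniusTwenty : Finset (Perm (Fin 5)) :=
  Finset.univ.image fun ij : Fin 5 × Fin 4 =>
    (c[0, 1, 2, 3, 4] : Perm (Fin 5)) ^ (ij.1 : ℕ) * c[0, 1, 3, 2] ^ (ij.2 : ℕ)

theorem coe_frobeniusTwenty_subset_closure :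
    (frobeniusTwenty : Set (Perm (Fin 5))) ⊆
      Subgroup.closure {(c[0, 1, 2, 3, 4] : Perm (Fin 5)), c[0, 1, 3, 2]} := by
  intro _ h
  obtain ⟨⟨i, j⟩, -, rfl⟩ := Finset.mem_image.1 h
  exact mul_mem (pow_mem (Subgroup.subset_closure (by simp)) _)
    (pow_mem (Subgroup.subset_closure (by simp)) _)

set_option maxRecDepth 4000 in
theorem frobeniusTwenty_mul_mem :
    ∀ a ∈ frobeniusTwenty, ∀ b ∈ frobeniusTwenty, a * b ∈ frobeniusTwenty := by
  decide

set_option maxRecDepth 4000 in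
theorem card_closure_fiveCycle_fourCycle :
    Nat.card (Subgroup.closure {(c[0, 1, 2, 3, 4] : Perm (Fin 5)), c[0, 1, 3, 2]}) = 20 := by
  have generators_subset : {(c[0, 1, 2, 3, 4] : Perm (Fin 5)), c[0, 1, 3, 2]} ⊆
      (frobeniusTwenty : Set (Perm (Fin 5))) := by
    rintro _ (rfl | rfl) <;> decide
  rw [← SetLike.coe_sort_coe, Subgroup.coe_closure_eq_of_mul_mem generators_subset
    coe_frobeniusTwenty_subset_closure (by decide) frobeniusTwenty_mul_mem,
    Nat.card_coe_set_eq, Set.ncard_coe_finset]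
  decide

/-- In `ℤ[x₁, …, x₅]` with `S₅` acting by permuting the variables, let
`δ = x₁x₂ + x₂x₃ + x₃x₄ + x₄x₅ + x₅x₁ − x₁x₃ − x₃x₅ − x₅x₂ − x₂x₄ − x₄x₁`.
Then the `5`-cycle `(1 2 3 4 5)` fixes `δ`, the `4`-cycle `(1 2 4 3)` sends `δ` to `−δ`,
and consequently `δ²` is fixed by every element of the subgroup generated by these two
permutations (a subgroup of order `20`).  (Zero-indexed, the two permutations are the
cycles `(0 1 2 3 4)` and `(0 1 3 2)`.) -/
theorem stmt_14 (δ : MvPolynomial (Fin 5) ℤ)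
    (hδ : δ = X 0 * X 1 + X 1 * X 2 + X 2 * X 3 + X 3 * X 4 + X 4 * X 0
      - X 0 * X 2 - X 2 * X 4 - X 4 * X 1 - X 1 * X 3 - X 3 * X 0)
    (c5 c4 : Equiv.Perm (Fin 5))
    (hc5 : c5 = c[0, 1, 2, 3, 4]) (hc4 : c4 = c[0, 1, 3, 2]) :
    rename ⇑c5 δ = δ ∧
    rename ⇑c4 δ = -δ ∧
    (∀ g ∈ Subgroup.closure {c5, c4}, rename ⇑g (δ ^ 2) = δ ^ 2) ∧
    Nat.card (Subgroup.closure {c5, c4}) = 20 := by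
  subst hδ hc5 hc4
  have h5 := rename_fiveCycle_cayleyDelta ℤ
  have h4 := rename_fourCycle_cayleyDelta ℤ
  refine ⟨h5, h4, fun g hg => ?_, card_closure_fiveCycle_fourCycle⟩
  refine (Subgroup.closure_le (renameStabilizer (cayleyDelta ℤ ^ 2))).2 ?_ hg
  rintro _ (rfl | rfl) <;> simp [mem_renameStabilizer, h5, h4]
end
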